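/- arXiv:2204.02732 — 5 statements merged into one kernel-verified Lean document; each statement's English description precedes it below -/
import Mathlib

section
/- Let s ≥ 2 be an integer and let S be a Steiner triple system of order v = 6s+1. If S admits an ℓ-good sequencing (ℓ ≥ 3), then ℓ ≤ 2s. -/
/-- A Steiner triple system on point set `points` with block set `blocks`:
every block is a 3-element subset of `points`, and every pair of distinct
points lies in exactly one block. -/
def IsSTS {α : Type*} [DecidableEq α] (points : Finset α) (blocks : Finset (Finset α)) : Prop :=
  (∀ b ∈ blocks, b ⊆ points ∧ b.card = 3) ∧
  (∀ x ∈ points, ∀ y ∈ points, x ≠ y → ∃! b, b ∈ blocks ∧ x ∈ b ∧ y ∈ b)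

/-- An `ℓ`-good sequencing: a permutation (listing) of the points such that no
`ℓ` consecutive entries contain a block. -/
def IsGoodSeq {α : Type*} [DecidableEq α] (points : Finset α) (blocks : Finset (Finset α))
    (ℓ : ℕ) (L : List α) : Prop :=
  L.Nodup ∧ L.toFinset = points ∧
  ∀ i : ℕ, ∀ b ∈ blocks, ¬ b ⊆ ((L.drop i).take ℓ).toFinset

/-- A cyclic `ℓ`-good sequencing: a permutation (listing) of the points such that no
`ℓ` cyclically consecutive entries contain a block. -/
def IsCyclicGoodSeq {α : Type*} [DecidableEq α] (points : Finset α) (blocks : Finset (Finset α))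
    (ℓ : ℕ) (L : List α) : Prop :=
  L.Nodup ∧ L.toFinset = points ∧
  ∀ i : ℕ, ∀ b ∈ blocks, ¬ b ⊆ (((L ++ L).drop i).take ℓ).toFinset

/-- An independent set: a set of points containing no block. -/
def IsIndep {α : Type*} [DecidableEq α] (blocks : Finset (Finset α)) (I : Finset α) : Prop :=
  ∀ b ∈ blocks, ¬ b ⊆ I

/-- A (proper) colouring with colour set `Fin k`: no block is monochromatic,
i.e. every colour class is an independent set. -/
def IsColouring {α : Type*} [DecidableEq α] (blocks : Finset (Finset α)) {k : ℕ}
    (χ : α → Fin k) : Prop :=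
  ∀ b ∈ blocks, ∃ x ∈ b, ∃ y ∈ b, χ x ≠ χ y

/-- A colouring with three explicitly given colour classes `A`, `B`, `C`:
they partition the point set and each is independent. -/
def IsColouring3 {α : Type*} [DecidableEq α] (points : Finset α) (blocks : Finset (Finset α))
    (A B C : Finset α) : Prop :=
  A ∪ B ∪ C = points ∧ Disjoint A B ∧ Disjoint A C ∧ Disjoint B C ∧
  IsIndep blocks A ∧ IsIndep blocks B ∧ IsIndep blocks C


namespace STS0Aux

open Finset

/-- The Farkas-certificate weight on positions. -/
def Wf (s i j : ℕ) : ℤ :=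
  if (i < 3*s+1) ↔ (j < 3*s+1) then (if i ≤ j + 2*s ∧ j ≤ i + 2*s then 2 else -4) else -1

lemma Wf_symm (s i j : ℕ) : Wf s i j = Wf s j i := by
  unfold Wf; split_ifs <;> omega

lemma Wf_diag (s i : ℕ) : Wf s i i = 2 := by
  unfold Wf; split_ifs <;> omega

lemma Wf_tri (s i j k : ℕ) (h : i + (2*s+1) ≤ j) :
    Wf s i j + Wf s i k + Wf s j k ≤ 0 := by
  unfold Wf; split_ifs <;> omega
lemma sum_ind (N : ℕ) (P : ℕ → Prop) [DecidablePred P] (a b : ℕ)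
    (hab : ∀ j, j < N → (P j ↔ (a ≤ j ∧ j < b))) (hb : b ≤ N) :
    ∑ j ∈ range N, (if P j then (1:ℤ) else 0) = (b - a : ℕ) := by
  rw [← Finset.sum_filter]
  have : (range N).filter P = Finset.Ico a b := by
    ext j
    simp only [Finset.mem_filter, Finset.mem_range, Finset.mem_Ico]
    constructor
    · rintro ⟨hj, hp⟩; exact (hab j hj).1 hp
    · rintro ⟨h1, h2⟩
      have hj : j < N := lt_of_lt_of_le h2 hb
      exact ⟨hj, (hab j hj).2 ⟨h1, h2⟩⟩
  rw [this]
  simp [Nat.card_Ico]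
lemma inner_A (s i : ℕ) (hi : i < 3*s+1) :
    ∑ j ∈ range (6*s+1), Wf s i j
      = (3*s+2 : ℤ) - 6*((i - 2*s : ℕ) : ℤ) - 6*((s - i : ℕ) : ℤ) := by
  have key : ∀ j ∈ range (6*s+1), Wf s i j =
      2 - (if j + 2*s < i then (6:ℤ) else 0) - (if i + 2*s < j ∧ j < 3*s+1 then (6:ℤ) else 0)
        - (if 3*s+1 ≤ j then (3:ℤ) else 0) := by
    intro j _
    unfold Wf; split_ifs <;> omega
  rw [Finset.sum_congr rfl key]
  simp only [Finset.sum_sub_distrib, Finset.sum_const, Finset.card_range]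
  have e1 : ∑ j ∈ range (6*s+1), (if j + 2*s < i then (6:ℤ) else 0)
      = 6*((i - 2*s : ℕ) : ℤ) := by
    have : ∀ j ∈ range (6*s+1), (if j + 2*s < i then (6:ℤ) else 0)
        = 6 * (if j + 2*s < i then (1:ℤ) else 0) := by intro j _; split_ifs <;> ring
    rw [Finset.sum_congr rfl this, ← Finset.mul_sum,
        sum_ind _ _ 0 (i - 2*s) (fun j _ => by omega) (by omega)]
    norm_num
  have e2 : ∑ j ∈ range (6*s+1), (if i + 2*s < j ∧ j < 3*s+1 then (6:ℤ) else 0)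
      = 6*((s - i : ℕ) : ℤ) := by
    have : ∀ j ∈ range (6*s+1), (if i + 2*s < j ∧ j < 3*s+1 then (6:ℤ) else 0)
        = 6 * (if i + 2*s < j ∧ j < 3*s+1 then (1:ℤ) else 0) := by intro j _; split_ifs <;> ring
    rw [Finset.sum_congr rfl this, ← Finset.mul_sum,
        sum_ind _ _ (i+2*s+1) (3*s+1) (fun j _ => by omega) (by omega)]
    congr 1; omega
  have e3 : ∑ j ∈ range (6*s+1), (if 3*s+1 ≤ j then (3:ℤ) else 0)
      = 3*((3*s : ℕ) : ℤ) := by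
    have : ∀ j ∈ range (6*s+1), (if 3*s+1 ≤ j then (3:ℤ) else 0)
        = 3 * (if 3*s+1 ≤ j then (1:ℤ) else 0) := by intro j _; split_ifs <;> ring
    rw [Finset.sum_congr rfl this, ← Finset.mul_sum,
        sum_ind _ _ (3*s+1) (6*s+1) (fun j _ => by omega) (by omega)]
    congr 1; omega
  rw [e1, e2, e3]
  push_cast
  ring
lemma inner_B (s i : ℕ) (hi1 : 3*s+1 ≤ i) (hi2 : i < 6*s+1) :
    ∑ j ∈ range (6*s+1), Wf s i j
      = (3*s-1 : ℤ) - 6*((i - 2*s - (3*s+1) : ℕ) : ℤ) - 6*((4*s - i : ℕ) : ℤ) := by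
  have key : ∀ j ∈ range (6*s+1), Wf s i j =
      2 - (if j < 3*s+1 then (3:ℤ) else 0) - (if 3*s+1 ≤ j ∧ j + 2*s < i then (6:ℤ) else 0)
        - (if i + 2*s < j then (6:ℤ) else 0) := by
    intro j hj
    simp only [Finset.mem_range] at hj
    unfold Wf; split_ifs <;> omega
  rw [Finset.sum_congr rfl key]
  simp only [Finset.sum_sub_distrib, Finset.sum_const, Finset.card_range]
  have e1 : ∑ j ∈ range (6*s+1), (if j < 3*s+1 then (3:ℤ) else 0)
      = 3*((3*s+1 : ℕ) : ℤ) := by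
    have : ∀ j ∈ range (6*s+1), (if j < 3*s+1 then (3:ℤ) else 0)
        = 3 * (if j < 3*s+1 then (1:ℤ) else 0) := by intro j _; split_ifs <;> ring
    rw [Finset.sum_congr rfl this, ← Finset.mul_sum,
        sum_ind _ _ 0 (3*s+1) (fun j _ => by omega) (by omega)]
    omega
  have e2 : ∑ j ∈ range (6*s+1), (if 3*s+1 ≤ j ∧ j + 2*s < i then (6:ℤ) else 0)
      = 6*((i - 2*s - (3*s+1) : ℕ) : ℤ) := by
    have : ∀ j ∈ range (6*s+1), (if 3*s+1 ≤ j ∧ j + 2*s < i then (6:ℤ) else 0)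
        = 6 * (if 3*s+1 ≤ j ∧ j + 2*s < i then (1:ℤ) else 0) := by intro j _; split_ifs <;> ring
    rw [Finset.sum_congr rfl this, ← Finset.mul_sum,
        sum_ind _ _ (3*s+1) (i - 2*s) (fun j _ => by omega) (by omega)]
    try omega
  have e3 : ∑ j ∈ range (6*s+1), (if i + 2*s < j then (6:ℤ) else 0)
      = 6*((4*s - i : ℕ) : ℤ) := by
    have : ∀ j ∈ range (6*s+1), (if i + 2*s < j then (6:ℤ) else 0)
        = 6 * (if i + 2*s < j then (1:ℤ) else 0) := by intro j _; split_ifs <;> ring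
    rw [Finset.sum_congr rfl this, ← Finset.mul_sum,
        sum_ind _ _ (i+2*s+1) (6*s+1) (fun j _ => by omega) (by omega)]
    omega
  rw [e1, e2, e3]
  push_cast
  ring
lemma trunc1 (m N : ℕ) (h : m ≤ N) :
    ∑ i ∈ range N, (m - 1 - i) = ∑ i ∈ range m, i := by
  have h1 : ∑ i ∈ range N, (m - 1 - i) = ∑ i ∈ range m, (m - 1 - i) := by
    rw [← Finset.sum_subset (Finset.range_subset_range.mpr h)]
    intro x _ hx
    simp only [Finset.mem_range] at hx
    omega
  rw [h1, ← Finset.sum_range_reflect (fun i => i) m]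
lemma trunc2 (d m : ℕ) :
    ∑ i ∈ range (d+m), (i - d) = ∑ i ∈ range m, i := by
  rw [← Finset.sum_range_reflect (fun i => i - d) (d+m)]
  have : ∀ i ∈ range (d+m), (d + m - 1 - i - d) = (m - 1 - i) := by
    intro i hi; simp only [Finset.mem_range] at hi; omega
  rw [Finset.sum_congr rfl this]
  exact trunc1 m (d+m) (by omega)
lemma total (s : ℕ) (hs : 1 ≤ s) :
    ∑ i ∈ range (6*s+1), ∑ j ∈ range (6*s+1), Wf s i j = 6*s^2 + 6*s + 2 := by
  have hG1 : ((∑ i ∈ range (s+1), i : ℕ) : ℤ) * 2 = (s+1) * s := by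
    exact_mod_cast congrArg (Nat.cast : ℕ → ℤ) (Finset.sum_range_id_mul_two (s+1))
  have hG0 : ((∑ i ∈ range s, i : ℕ) : ℤ) * 2 = s * ((s:ℤ) - 1) := by
    have h3 := congrArg (Nat.cast : ℕ → ℤ) (Finset.sum_range_id_mul_two s)
    push_cast [Nat.cast_sub hs] at h3
    push_cast
    linarith
  have p1 : ∑ i ∈ range (3*s+1), ∑ j ∈ range (6*s+1), Wf s i j
      = ((3*s+1 : ℤ) * (3*s+2)) - 12 * ((∑ i ∈ range (s+1), i : ℕ) : ℤ) := by
    have hc : ∑ i ∈ range (3*s+1), ∑ j ∈ range (6*s+1), Wf s i j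
        = ∑ i ∈ range (3*s+1),
            ((3*s+2 : ℤ) - 6*((i - 2*s : ℕ) : ℤ) - 6*((s - i : ℕ) : ℤ)) :=
      Finset.sum_congr rfl (fun i hi => inner_A s i (Finset.mem_range.mp hi))
    rw [hc, Finset.sum_sub_distrib, Finset.sum_sub_distrib, Finset.sum_const,
        Finset.card_range, ← Finset.mul_sum, ← Finset.mul_sum]
    have n1 : ∑ i ∈ range (3*s+1), ((i - 2*s : ℕ) : ℤ)
        = ((∑ i ∈ range (s+1), i : ℕ) : ℤ) := by
      rw [← Nat.cast_sum]
      congr 1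
      rw [show 3*s+1 = 2*s + (s+1) by ring]
      exact trunc2 (2*s) (s+1)
    have n2 : ∑ i ∈ range (3*s+1), ((s - i : ℕ) : ℤ)
        = ((∑ i ∈ range (s+1), i : ℕ) : ℤ) := by
      rw [← Nat.cast_sum]
      congr 1
      have e : ∀ i ∈ range (3*s+1), s - i = (s+1) - 1 - i := fun i _ => by omega
      rw [Finset.sum_congr rfl e]
      exact trunc1 (s+1) (3*s+1) (by omega)
    rw [n1, n2]
    push_cast
    ring
  have p2 : ∑ i ∈ Finset.Ico (3*s+1) (6*s+1), ∑ j ∈ range (6*s+1), Wf s i j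
      = ((3*s : ℤ) * (3*s-1)) - 12 * ((∑ i ∈ range s, i : ℕ) : ℤ) := by
    have hc : ∑ i ∈ Finset.Ico (3*s+1) (6*s+1), ∑ j ∈ range (6*s+1), Wf s i j
        = ∑ i ∈ Finset.Ico (3*s+1) (6*s+1),
            ((3*s-1 : ℤ) - 6*((i - 2*s - (3*s+1) : ℕ) : ℤ) - 6*((4*s - i : ℕ) : ℤ)) :=
      Finset.sum_congr rfl (fun i hi => by
        rw [Finset.mem_Ico] at hi
        exact inner_B s i hi.1 hi.2)
    rw [hc, Finset.sum_Ico_eq_sum_range]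
    have hlen : 6*s+1 - (3*s+1) = 3*s := by omega
    rw [hlen, Finset.sum_sub_distrib, Finset.sum_sub_distrib, Finset.sum_const,
        Finset.card_range, ← Finset.mul_sum, ← Finset.mul_sum]
    have n1 : ∑ k ∈ range (3*s), ((3*s+1+k - 2*s - (3*s+1) : ℕ) : ℤ)
        = ((∑ i ∈ range s, i : ℕ) : ℤ) := by
      rw [← Nat.cast_sum]
      congr 1
      have e : ∀ k ∈ range (3*s), 3*s+1+k - 2*s - (3*s+1) = k - 2*s := fun k _ => by omega
      rw [Finset.sum_congr rfl e, show 3*s = 2*s + s by ring]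
      exact trunc2 (2*s) s
    have n2 : ∑ k ∈ range (3*s), ((4*s - (3*s+1+k) : ℕ) : ℤ)
        = ((∑ i ∈ range s, i : ℕ) : ℤ) := by
      rw [← Nat.cast_sum]
      congr 1
      have e : ∀ k ∈ range (3*s), 4*s - (3*s+1+k) = s - 1 - k := fun k _ => by omega
      rw [Finset.sum_congr rfl e]
      exact trunc1 s (3*s) (by omega)
    rw [n1, n2]
    push_cast
    ring
  have hsum : ∑ i ∈ range (6*s+1), ∑ j ∈ range (6*s+1), Wf s i j
      = (∑ i ∈ range (3*s+1), ∑ j ∈ range (6*s+1), Wf s i j)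
        + ∑ i ∈ Finset.Ico (3*s+1) (6*s+1), ∑ j ∈ range (6*s+1), Wf s i j := by
    have h0 : ∀ (m : ℕ), range m = Finset.Ico 0 m := fun m => Finset.range_eq_Ico (a := m)
    have h1 := Finset.sum_Ico_consecutive (fun i => ∑ j ∈ range (6*s+1), Wf s i j)
      (Nat.zero_le (3*s+1)) (by omega : 3*s+1 ≤ 6*s+1)
    rw [← h0 (6*s+1), ← h0 (3*s+1)] at h1
    exact h1.symm
  rw [hsum, p1, p2]
  linear_combination (-6 : ℤ)*hG1 + (-6 : ℤ)*hG0
lemma span_lemma {α : Type*} [DecidableEq α] (points : Finset α) (blocks : Finset (Finset α))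
    (s ℓ : ℕ) (L : List α) (hnd : L.Nodup) (htf : L.toFinset = points)
    (hgood : ∀ i : ℕ, ∀ b ∈ blocks, ¬ b ⊆ ((L.drop i).take ℓ).toFinset)
    (hl : 2*s+1 ≤ ℓ) (b : Finset α) (hb : b ∈ blocks) (hsub : b ⊆ points)
    (hne : b.Nonempty) :
    ∃ u ∈ b, ∃ v ∈ b, L.idxOf u + (2*s+1) ≤ L.idxOf v := by
  by_contra hcon
  push_neg at hcon
  obtain ⟨u₀, hu₀, hmin⟩ := Finset.exists_min_image b (fun x => L.idxOf x) hne
  apply hgood (L.idxOf u₀) b hb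
  intro v hv
  have hvL : v ∈ L := by
    rw [← List.mem_toFinset, htf]; exact hsub hv
  have hlt : L.idxOf v < L.length := List.idxOf_lt_length_iff.mpr hvL
  have h1 : L.idxOf u₀ ≤ L.idxOf v := hmin v hv
  have h2 : L.idxOf v < L.idxOf u₀ + (2*s+1) := hcon u₀ hu₀ v hv
  rw [List.mem_toFinset]
  have hlen1 : (L.drop (L.idxOf u₀)).length = L.length - L.idxOf u₀ := List.length_drop
  have hidx : L.idxOf v - L.idxOf u₀ < ((L.drop (L.idxOf u₀)).take ℓ).length := by
    rw [List.length_take, hlen1]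
    omega
  have hidx2 : L.idxOf v - L.idxOf u₀ < (L.drop (L.idxOf u₀)).length := by
    rw [hlen1]; omega
  have key : ((L.drop (L.idxOf u₀)).take ℓ)[L.idxOf v - L.idxOf u₀]'hidx = v := by
    rw [List.getElem_take, List.getElem_drop]
    have e : L.idxOf u₀ + (L.idxOf v - L.idxOf u₀) = L.idxOf v := by omega
    simp only [e]
    exact List.getElem_idxOf hlt
  rw [← key]
  exact List.getElem_mem _
lemma sum_transfer {α : Type*} [DecidableEq α] (L : List α) (hnd : L.Nodup) (f : ℕ → ℤ) :
    ∑ x ∈ L.toFinset, f (L.idxOf x) = ∑ i ∈ range L.length, f i := by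
  refine Finset.sum_bij' (fun x _ => L.idxOf x)
    (fun n hn => L[n]'(Finset.mem_range.mp hn)) ?_ ?_ ?_ ?_ ?_
  · intro a ha
    simp only [Finset.mem_range]
    exact List.idxOf_lt_length_iff.mpr (List.mem_toFinset.mp ha)
  · intro n hn
    exact List.mem_toFinset.mpr (List.getElem_mem _)
  · intro a ha
    exact List.getElem_idxOf (List.idxOf_lt_length_iff.mpr (List.mem_toFinset.mp ha))
  · intro n hn
    exact List.Nodup.idxOf_getElem hnd _ _
  · intro a ha
    rfl
lemma partition_sum {α : Type*} [DecidableEq α] (points : Finset α) (blocks : Finset (Finset α))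
    (hsub : ∀ b ∈ blocks, b ⊆ points)
    (huniq : ∀ x ∈ points, ∀ y ∈ points, x ≠ y → ∃! b, b ∈ blocks ∧ x ∈ b ∧ y ∈ b)
    (w : α → α → ℤ) :
    ∑ x ∈ points, ∑ y ∈ points.erase x, w x y
      = ∑ b ∈ blocks, ∑ x ∈ b, ∑ y ∈ b.erase x, w x y := by
  have step1 : ∀ x ∈ points, ∀ y ∈ points.erase x,
      w x y = ∑ b ∈ blocks, (if x ∈ b ∧ y ∈ b then w x y else 0) := by
    intro x hx y hy
    rw [Finset.mem_erase] at hy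
    obtain ⟨b₀, hb₀, hb₀u⟩ := huniq x hx y hy.2 (Ne.symm hy.1)
    rw [← Finset.sum_filter]
    have hfil : blocks.filter (fun b => x ∈ b ∧ y ∈ b) = {b₀} := by
      ext c
      simp only [Finset.mem_filter, Finset.mem_singleton]
      constructor
      · rintro ⟨hc, hxc, hyc⟩; exact hb₀u c ⟨hc, hxc, hyc⟩
      · rintro rfl; exact ⟨hb₀.1, hb₀.2.1, hb₀.2.2⟩
    rw [hfil, Finset.sum_singleton]
  calc ∑ x ∈ points, ∑ y ∈ points.erase x, w x y
      = ∑ x ∈ points, ∑ y ∈ points.erase x, ∑ b ∈ blocks, (if x ∈ b ∧ y ∈ b then w x y else 0) := by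
        refine Finset.sum_congr rfl (fun x hx => Finset.sum_congr rfl (fun y hy => ?_))
        exact step1 x hx y hy
    _ = ∑ b ∈ blocks, ∑ x ∈ points, ∑ y ∈ points.erase x, (if x ∈ b ∧ y ∈ b then w x y else 0) := by
        rw [Finset.sum_comm]
        refine Finset.sum_congr rfl (fun b _ => ?_)
        rw [Finset.sum_comm]
    _ = ∑ b ∈ blocks, ∑ x ∈ b, ∑ y ∈ b.erase x, w x y := by
        refine Finset.sum_congr rfl (fun b hb => ?_)
        rw [← Finset.sum_subset (hsub b hb)]
        · refine Finset.sum_congr rfl (fun x hx => ?_)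
          rw [← Finset.sum_subset (Finset.erase_subset_erase x (hsub b hb))]
          · refine Finset.sum_congr rfl (fun y hy => ?_)
            rw [if_pos ⟨hx, (Finset.mem_erase.mp hy).2⟩]
          · intro y hy hyb
            rw [if_neg]
            rintro ⟨-, hyb'⟩
            exact hyb (Finset.mem_erase.mpr ⟨(Finset.mem_erase.mp hy).1, hyb'⟩)
        · intro x _ hxb
          apply Finset.sum_eq_zero
          intro y _
          rw [if_neg]
          rintro ⟨hxb', -⟩
          exact hxb hxb'
lemma triple_sum {α : Type*} [DecidableEq α] (w : α → α → ℤ)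
    (hsymm : ∀ x y, w x y = w y x) (u v t : α) (huv : u ≠ v) (hut : u ≠ t) (hvt : v ≠ t) :
    ∑ x ∈ ({u,v,t} : Finset α), ∑ y ∈ ({u,v,t} : Finset α).erase x, w x y
      = 2*(w u v + w u t + w v t) := by
  have e1 : ({u,v,t} : Finset α).erase u = {v,t} := by
    rw [Finset.erase_insert (by simp [huv, hut])]
  have e2 : ({u,v,t} : Finset α).erase v = {u,t} := by
    ext a
    simp only [Finset.mem_erase, Finset.mem_insert, Finset.mem_singleton]
    constructor
    · rintro ⟨hav, rfl | rfl | rfl⟩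
      · exact Or.inl rfl
      · exact absurd rfl hav
      · exact Or.inr rfl
    · rintro (rfl | rfl)
      · exact ⟨huv, Or.inl rfl⟩
      · exact ⟨Ne.symm hvt, Or.inr (Or.inr rfl)⟩
  have e3 : ({u,v,t} : Finset α).erase t = {u,v} := by
    ext a
    simp only [Finset.mem_erase, Finset.mem_insert, Finset.mem_singleton]
    constructor
    · rintro ⟨hat, rfl | rfl | rfl⟩
      · exact Or.inl rfl
      · exact Or.inr rfl
      · exact absurd rfl hat
    · rintro (rfl | rfl)
      · exact ⟨hut, Or.inl rfl⟩
      · exact ⟨hvt, Or.inr (Or.inl rfl)⟩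
  have huvt : u ∉ ({v,t} : Finset α) := by simp [huv, hut]
  have hvt' : v ∉ ({t} : Finset α) := by simp [hvt]
  have hut' : u ∉ ({t} : Finset α) := by simp [hut]
  have huv' : u ∉ ({v} : Finset α) := by simp [huv]
  rw [Finset.sum_insert huvt, Finset.sum_insert hvt', Finset.sum_singleton,
      e1, e2, e3,
      Finset.sum_insert hvt', Finset.sum_singleton,
      Finset.sum_insert hut', Finset.sum_singleton,
      Finset.sum_insert huv', Finset.sum_singleton]
  rw [hsymm v u, hsymm t u, hsymm t v]
  ring

end STS0Aux

theorem stmt0 {α : Type*} [DecidableEq α] (points : Finset α) (blocks : Finset (Finset α))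
    (s : ℕ) (hs : 2 ≤ s) (hS : IsSTS points blocks) (hv : points.card = 6 * s + 1)
    (ℓ : ℕ) (hℓ : 3 ≤ ℓ) (L : List α) (hL : IsGoodSeq points blocks ℓ L) :
    ℓ ≤ 2 * s := by
  classical
  by_contra hcon
  push_neg at hcon
  have hl : 2*s+1 ≤ ℓ := by omega
  obtain ⟨hnd, htf, hgood⟩ := hL
  obtain ⟨hbp, huniq⟩ := hS
  have hsub : ∀ b ∈ blocks, b ⊆ points := fun b hb => (hbp b hb).1
  have hcard3 : ∀ b ∈ blocks, b.card = 3 := fun b hb => (hbp b hb).2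
  have hlen : L.length = 6*s+1 := by
    rw [← List.toFinset_card_of_nodup hnd, htf]; exact hv
  set w : α → α → ℤ := fun x y => STS0Aux.Wf s (L.idxOf x) (L.idxOf y) with hw
  -- per-block bound
  have blockBound : ∀ b ∈ blocks, ∑ x ∈ b, ∑ y ∈ b.erase x, w x y ≤ 0 := by
    intro b hb
    have hne : b.Nonempty := Finset.card_pos.mp (by rw [hcard3 b hb]; omega)
    obtain ⟨u, hu, v, hv', hfar⟩ := STS0Aux.span_lemma points blocks s ℓ L hnd htf hgood hl
      b hb (hsub b hb) hne
    have huv : u ≠ v := by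
      rintro rfl; omega
    have h2 : (b.erase u).card = 2 := by
      rw [Finset.card_erase_of_mem hu, hcard3 b hb]
    have hvmem : v ∈ b.erase u := Finset.mem_erase.mpr ⟨Ne.symm huv, hv'⟩
    have h1 : ((b.erase u).erase v).card = 1 := by
      rw [Finset.card_erase_of_mem hvmem, h2]
    obtain ⟨t, ht⟩ := Finset.card_eq_one.mp h1
    have htmem : t ∈ (b.erase u).erase v := by rw [ht]; exact Finset.mem_singleton_self t
    have htv : t ≠ v := (Finset.mem_erase.mp htmem).1
    have htu : t ≠ u := (Finset.mem_erase.mp (Finset.mem_erase.mp htmem).2).1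
    have htb : t ∈ b := (Finset.mem_erase.mp (Finset.mem_erase.mp htmem).2).2
    have hbe : b = {u, v, t} := by
      ext a
      simp only [Finset.mem_insert, Finset.mem_singleton]
      constructor
      · intro ha
        by_cases h1 : a = u
        · exact Or.inl h1
        by_cases h2 : a = v
        · exact Or.inr (Or.inl h2)
        have : a ∈ (b.erase u).erase v :=
          Finset.mem_erase.mpr ⟨h2, Finset.mem_erase.mpr ⟨h1, ha⟩⟩
        rw [ht] at this
        exact Or.inr (Or.inr (Finset.mem_singleton.mp this))
      · rintro (rfl | rfl | rfl)
        · exact hu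
        · exact hv'
        · exact htb
    have hsymm : ∀ x y, w x y = w y x := fun x y => STS0Aux.Wf_symm s _ _
    rw [hbe, STS0Aux.triple_sum w hsymm u v t huv (Ne.symm htu) (Ne.symm htv)]
    have := STS0Aux.Wf_tri s (L.idxOf u) (L.idxOf v) (L.idxOf t) hfar
    simp only [hw]
    linarith
  -- partition identity
  have hpart := STS0Aux.partition_sum points blocks hsub huniq w
  have hRHS : ∑ b ∈ blocks, ∑ x ∈ b, ∑ y ∈ b.erase x, w x y ≤ 0 :=
    Finset.sum_nonpos blockBound
  -- total sum computation
  have hLHS : ∑ x ∈ points, ∑ y ∈ points.erase x, w x y = 6*(s:ℤ)^2 - 6*s := by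
    have step : ∀ x ∈ points, ∑ y ∈ points.erase x, w x y
        = (∑ y ∈ points, w x y) - w x x := by
      intro x hx
      rw [← Finset.add_sum_erase points (w x) hx]
      ring
    rw [Finset.sum_congr rfl step, Finset.sum_sub_distrib]
    have hdiag : ∑ x ∈ points, w x x = 2 * (6*(s:ℤ) + 1) := by
      have : ∀ x ∈ points, w x x = 2 := fun x _ => STS0Aux.Wf_diag s _
      rw [Finset.sum_congr rfl this, Finset.sum_const, hv]
      push_cast
      ring
    have hdouble : ∑ x ∈ points, ∑ y ∈ points, w x y = 6*(s:ℤ)^2 + 6*s + 2 := by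
      have inner : ∀ x ∈ points, ∑ y ∈ points, w x y
          = ∑ j ∈ Finset.range (6*s+1), STS0Aux.Wf s (L.idxOf x) j := by
        intro x _
        rw [← htf, ← hlen]
        exact STS0Aux.sum_transfer L hnd (fun j => STS0Aux.Wf s (L.idxOf x) j)
      rw [Finset.sum_congr rfl inner]
      have outer : ∑ x ∈ points, (fun i => ∑ j ∈ Finset.range (6*s+1), STS0Aux.Wf s i j) (L.idxOf x)
          = ∑ i ∈ Finset.range (6*s+1), ∑ j ∈ Finset.range (6*s+1), STS0Aux.Wf s i j := by
        rw [← htf, ← hlen]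
        have := STS0Aux.sum_transfer L hnd (fun i => ∑ j ∈ Finset.range (6*s+1), STS0Aux.Wf s i j)
        rw [hlen] at this ⊢
        exact this
      rw [outer, STS0Aux.total s (by omega)]
    rw [hdiag, hdouble]
    ring
  rw [hLHS] at hpart
  rw [← hpart] at hRHS
  have hspos : (2:ℤ) ≤ (s:ℤ) := by exact_mod_cast hs
  nlinarith [hRHS, hspos]
end

section
/- Let s ≥ 1 be an integer and let S be a Steiner triple system of order v = 6s+3. If S admits an ℓ-good sequencing (ℓ ≥ 3), then ℓ ≤ 2s+1. -/
open Finset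

/-! ### Auxiliary arithmetic: the weight certificate -/

/-- Certificate weight function on positions `0..6s+2` with centre `3s+1`. -/
def Wt (s i j : ℕ) : ℤ :=
  if i = j then 0
  else if (i < 3*s+1 ∧ j < 3*s+1) ∨ (3*s+1 < i ∧ 3*s+1 < j) then
    (if i + (2*s+2) ≤ j ∨ j + (2*s+2) ≤ i then -8 else 4)
  else if i = 3*s+1 ∨ j = 3*s+1 then
    (if i + (2*s+2) ≤ j ∨ j + (2*s+2) ≤ i then -5 else 1)
  else -2

lemma Wt_symm (s i j : ℕ) : Wt s i j = Wt s j i := by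
  unfold Wt; split_ifs <;> omega

lemma Wt_diag (s i : ℕ) : Wt s i i = 0 := by simp [Wt]

set_option maxHeartbeats 4000000 in
lemma Wt_triple_sorted (s p q r : ℕ) (hpq : p < q) (hqr : q < r)
    (hspan : 2*s+2 + p ≤ r) :
    Wt s p q + Wt s q r + Wt s p r ≤ 0 := by
  unfold Wt; split_ifs <;> omega

lemma Wt_triple (s a b c : ℕ) (hab : a ≠ b) (hac : a ≠ c) (hbc : b ≠ c)
    (hspan : 2*s+2 + min a (min b c) ≤ max a (max b c)) :
    Wt s a b + Wt s b c + Wt s a c ≤ 0 := by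
  rcases Nat.lt_or_ge a b with h1 | h1
  · rcases Nat.lt_or_ge b c with h2 | h2
    · -- a < b < c
      have := Wt_triple_sorted s a b c h1 h2 (by omega)
      linarith
    · rcases Nat.lt_or_ge a c with h3 | h3
      · -- a < c < b
        have := Wt_triple_sorted s a c b h3 (by omega) (by omega)
        have e1 := Wt_symm s c b
        have e2 := Wt_symm s b c
        linarith [Wt_symm s c b]
      · -- c < a < b
        have := Wt_triple_sorted s c a b (by omega) h1 (by omega)
        linarith [Wt_symm s c a, Wt_symm s a c, Wt_symm s c b, Wt_symm s b c]
  · rcases Nat.lt_or_ge a c with h2 | h2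
    · -- b < a < c
      have := Wt_triple_sorted s b a c (by omega) h2 (by omega)
      linarith [Wt_symm s b a, Wt_symm s a b]
    · rcases Nat.lt_or_ge b c with h3 | h3
      · -- b < c < a
        have := Wt_triple_sorted s b c a h3 (by omega) (by omega)
        linarith [Wt_symm s b a, Wt_symm s c a, Wt_symm s a c, Wt_symm s a b]
      · -- c < b < a
        have := Wt_triple_sorted s c b a (by omega) (by omega) (by omega)
        linarith [Wt_symm s c b, Wt_symm s b c, Wt_symm s b a, Wt_symm s a b,
          Wt_symm s c a, Wt_symm s a c]

/-- side sign -/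
def sg (s i : ℕ) : ℤ := if i < 3*s+1 then -1 else if i = 3*s+1 then 0 else 1

set_option maxHeartbeats 4000000 in
lemma Wt_decomp (s i j : ℕ) : Wt s i j = 3 * sg s i * sg s j + 1
  - 12*(if j < 3*s+1 ∧ i + (2*s+2) ≤ j then 1 else 0)
  - 12*(if i < 3*s+1 ∧ j + (2*s+2) ≤ i then 1 else 0)
  - 12*(if 3*s+1 < i ∧ i + (2*s+2) ≤ j then 1 else 0)
  - 12*(if 3*s+1 < j ∧ j + (2*s+2) ≤ i then 1 else 0)
  - 6*(if i = 3*s+1 ∧ j + (2*s+2) ≤ i ∨ i = 3*s+1 ∧ i + (2*s+2) ≤ j then 1 else 0)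
  - 6*(if j = 3*s+1 ∧ i + (2*s+2) ≤ j ∨ j = 3*s+1 ∧ j + (2*s+2) ≤ i then 1 else 0)
  - (if i = j then (if i = 3*s+1 then 1 else 4) else 0) := by
  unfold Wt sg; split_ifs <;> omega

/-! ### Summation helpers -/

lemma helperA (M N : ℕ) : ∑ i ∈ range N, (i - M) = ∑ i ∈ range (N - M), i := by
  induction N with
  | zero => simp
  | succ n ih =>
    rw [Finset.sum_range_succ, ih]
    rcases le_or_gt M n with h | h
    · have h1 : n + 1 - M = (n - M) + 1 := by omega
      rw [h1, Finset.sum_range_succ]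
    · have h1 : n + 1 - M = 0 ∨ (n+1) - M = 1 := by omega
      have h2 : n - M = 0 := by omega
      rcases h1 with h1 | h1 <;> simp [h1, h2]

lemma helperB (M N : ℕ) (h : M + 1 ≤ N) : ∑ i ∈ range N, (M - i) = ∑ i ∈ range (M+1), i := by
  rw [← Finset.sum_subset (Finset.range_subset_range.2 h) (by intro x _ hx; simp at hx ⊢; omega)]
  rw [← Finset.sum_range_reflect (fun i => M - i) (M+1)]
  apply Finset.sum_congr rfl
  intro x hx; simp at hx; omega

lemma sum_sgn (s : ℕ) : ∑ i ∈ range (6*s+3), sg s i = 0 := by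
  have h1 : ∀ i, sg s i = (if 3*s+1 < i then (1:ℤ) else 0) - (if i < 3*s+1 then 1 else 0) := by
    intro i; unfold sg; split_ifs <;> omega
  simp only [h1]
  rw [Finset.sum_sub_distrib, Finset.sum_boole, Finset.sum_boole]
  have h2 : filter (fun i => 3*s+1 < i) (range (6*s+3)) = Ico (3*s+2) (6*s+3) := by
    ext x; simp [Finset.mem_Ico]; omega
  have h3 : filter (fun i => i < 3*s+1) (range (6*s+3)) = range (3*s+1) := by
    ext x; simp; omega
  rw [h2, h3, Nat.card_Ico, card_range]
  norm_num; omega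

lemma pieceSG (s : ℕ) :
    ∑ i ∈ range (6*s+3), ∑ j ∈ range (6*s+3), (3 * sg s i * sg s j) = 0 := by
  have h : ∀ i, ∑ j ∈ range (6*s+3), (3 * sg s i * sg s j) = 0 := by
    intro i; rw [← Finset.mul_sum, sum_sgn, mul_zero]
  simp only [h, Finset.sum_const_zero]

lemma pieceP1 (s : ℕ) (hs : 1 ≤ s) :
    ∑ i ∈ range (6*s+3), ∑ j ∈ range (6*s+3),
      (if j < 3*s+1 ∧ i + (2*s+2) ≤ j then (1:ℤ) else 0) = ↑(∑ i ∈ range s, i) := by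
  have hinner : ∀ i, ∑ j ∈ range (6*s+3), (if j < 3*s+1 ∧ i + (2*s+2) ≤ j then (1:ℤ) else 0)
      = ↑((s-1) - i) := by
    intro i
    rw [Finset.sum_boole]
    congr 1
    have : filter (fun j => j < 3*s+1 ∧ i + (2*s+2) ≤ j) (range (6*s+3))
        = Ico (i + (2*s+2)) (3*s+1) := by
      ext x; simp [Finset.mem_Ico]; omega
    rw [this, Nat.card_Ico]; omega
  simp only [hinner]
  rw [← Nat.cast_sum]
  congr 1
  rw [helperB (s-1) (6*s+3) (by omega)]
  have h : (s-1)+1 = s := by omega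
  rw [h]

lemma pieceP2 (s : ℕ) (hs : 1 ≤ s) :
    ∑ i ∈ range (6*s+3), ∑ j ∈ range (6*s+3),
      (if i < 3*s+1 ∧ j + (2*s+2) ≤ i then (1:ℤ) else 0) = ↑(∑ i ∈ range s, i) := by
  rw [Finset.sum_comm]
  exact pieceP1 s hs

lemma pieceP3 (s : ℕ) :
    ∑ j ∈ range (6*s+3), ∑ i ∈ range (6*s+3),
      (if 3*s+1 < i ∧ i + (2*s+2) ≤ j then (1:ℤ) else 0) = ↑(∑ i ∈ range s, i) := by
  have hinner : ∀ j ∈ range (6*s+3), ∑ i ∈ range (6*s+3),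
      (if 3*s+1 < i ∧ i + (2*s+2) ≤ j then (1:ℤ) else 0) = ↑(j - (5*s+3)) := by
    intro j hj
    rw [Finset.mem_range] at hj
    rw [Finset.sum_boole]
    congr 1
    have : filter (fun i => 3*s+1 < i ∧ i + (2*s+2) ≤ j) (range (6*s+3))
        = Ico (3*s+2) ((j+1) - (2*s+2)) := by
      ext x; simp [Finset.mem_Ico]; omega
    rw [this, Nat.card_Ico]; omega
  rw [Finset.sum_congr rfl hinner]
  rw [← Nat.cast_sum]
  congr 1
  rw [helperA (5*s+3) (6*s+3)]
  have h : (6*s+3) - (5*s+3) = s := by omega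
  rw [h]

lemma pieceP3' (s : ℕ) :
    ∑ i ∈ range (6*s+3), ∑ j ∈ range (6*s+3),
      (if 3*s+1 < i ∧ i + (2*s+2) ≤ j then (1:ℤ) else 0) = ↑(∑ i ∈ range s, i) := by
  rw [Finset.sum_comm]
  exact pieceP3 s

lemma pieceOne (s : ℕ) : ∑ _i ∈ range (6*s+3), ∑ _j ∈ range (6*s+3), (1:ℤ)
    = (6*(s:ℤ)+3)*(6*(s:ℤ)+3) := by
  simp [Finset.sum_const, card_range]

lemma pieceC (s : ℕ) : ∑ x ∈ range (6*s+3),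
    (if x + (2*s+2) ≤ 3*s+1 ∨ 3*s+1 + (2*s+2) ≤ x then (1:ℤ) else 0) = 2*(s:ℤ) := by
  have h1 : ∀ x, (if x + (2*s+2) ≤ 3*s+1 ∨ 3*s+1 + (2*s+2) ≤ x then (1:ℤ) else 0)
      = (if x < s then 1 else 0) + (if 5*s+3 ≤ x then 1 else 0) := by
    intro x; split_ifs <;> omega
  simp only [h1]
  rw [Finset.sum_add_distrib, Finset.sum_boole, Finset.sum_boole]
  have h2 : filter (fun x => x < s) (range (6*s+3)) = range s := by ext x; simp; omega
  have h3 : filter (fun x => 5*s+3 ≤ x) (range (6*s+3)) = Ico (5*s+3) (6*s+3) := by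
    ext x; simp [Finset.mem_Ico]; omega
  rw [h2, h3, Nat.card_Ico, card_range]
  push_cast; omega

lemma pieceC2 (s : ℕ) : ∑ i ∈ range (6*s+3), ∑ j ∈ range (6*s+3),
    (if j = 3*s+1 ∧ i + (2*s+2) ≤ j ∨ j = 3*s+1 ∧ j + (2*s+2) ≤ i then (1:ℤ) else 0)
    = 2*(s:ℤ) := by
  have hin : ∀ i, ∑ j ∈ range (6*s+3),
      (if j = 3*s+1 ∧ i + (2*s+2) ≤ j ∨ j = 3*s+1 ∧ j + (2*s+2) ≤ i then (1:ℤ) else 0)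
      = (if i + (2*s+2) ≤ 3*s+1 ∨ 3*s+1 + (2*s+2) ≤ i then (1:ℤ) else 0) := by
    intro i
    have hpt : ∀ j, (if j = 3*s+1 ∧ i + (2*s+2) ≤ j ∨ j = 3*s+1 ∧ j + (2*s+2) ≤ i then (1:ℤ) else 0)
        = (if j = 3*s+1 then (if i + (2*s+2) ≤ 3*s+1 ∨ 3*s+1 + (2*s+2) ≤ i then (1:ℤ) else 0) else 0) := by
      intro j; split_ifs <;> omega
    simp only [hpt]
    rw [Finset.sum_ite_eq', if_pos (by rw [Finset.mem_range]; omega)]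
  simp only [hin]
  exact pieceC s

lemma pieceC1 (s : ℕ) : ∑ i ∈ range (6*s+3), ∑ j ∈ range (6*s+3),
    (if i = 3*s+1 ∧ j + (2*s+2) ≤ i ∨ i = 3*s+1 ∧ i + (2*s+2) ≤ j then (1:ℤ) else 0)
    = 2*(s:ℤ) := by
  rw [Finset.sum_comm]
  exact pieceC2 s

lemma pieceD (s : ℕ) : ∑ i ∈ range (6*s+3), ∑ j ∈ range (6*s+3),
    (if i = j then (if i = 3*s+1 then (1:ℤ) else 4) else 0) = 24*(s:ℤ)+9 := by
  have hin : ∀ i ∈ range (6*s+3), ∑ j ∈ range (6*s+3),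
      (if i = j then (if i = 3*s+1 then (1:ℤ) else 4) else 0)
      = (if i = 3*s+1 then (1:ℤ) else 4) := by
    intro i hi
    rw [Finset.sum_ite_eq, if_pos hi]
  rw [Finset.sum_congr rfl hin]
  have hpt : ∀ i, (if i = 3*s+1 then (1:ℤ) else 4) = 4 - 3*(if i = 3*s+1 then (1:ℤ) else 0) := by
    intro i; split_ifs <;> ring
  simp only [hpt]
  rw [Finset.sum_sub_distrib, ← Finset.mul_sum, Finset.sum_ite_eq',
    if_pos (by rw [Finset.mem_range]; omega), Finset.sum_const, card_range]
  push_cast; ring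

lemma Wt_total (s : ℕ) (hs : 1 ≤ s) :
    ∑ i ∈ range (6*s+3), ∑ j ∈ range (6*s+3), Wt s i j = 12*(s:ℤ)^2 + 12*(s:ℤ) := by
  have hG : (∑ x ∈ range s, (x:ℤ)) * 2 = (s:ℤ)*(s:ℤ) - (s:ℤ) := by
    have h := Finset.sum_range_id_mul_two s
    have hc : (((∑ i ∈ range s, i) * 2 : ℕ) : ℤ) = ((s * (s-1) : ℕ) : ℤ) := by rw [h]
    push_cast [Nat.cast_sub hs] at hc
    linarith
  simp only [Wt_decomp s]
  simp only [Finset.sum_sub_distrib, Finset.sum_add_distrib, ← Finset.mul_sum]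
  rw [sum_sgn s]
  simp only [mul_zero, Finset.sum_const_zero, zero_add]
  rw [pieceOne s, pieceP1 s hs, pieceP2 s hs, pieceP3' s, pieceP3 s,
    pieceC1 s, pieceC2 s, pieceD s]
  push_cast
  linear_combination (-24 : ℤ) * hG
theorem stmt1 {α : Type*} [DecidableEq α] (points : Finset α) (blocks : Finset (Finset α))
    (s : ℕ) (hs : 1 ≤ s) (hS : IsSTS points blocks) (hv : points.card = 6 * s + 3)
    (ℓ : ℕ) (hℓ : 3 ≤ ℓ) (L : List α) (hL : IsGoodSeq points blocks ℓ L) :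
    ℓ ≤ 2 * s + 1 := by
  by_contra hcon
  push_neg at hcon
  obtain ⟨hnd, htf, hgood⟩ := hL
  have hlen : L.length = 6*s+3 := by
    have h := List.toFinset_card_of_nodup hnd
    rw [htf, hv] at h; omega
  set p : α → ℕ := fun x => List.idxOf x L with hp
  have hmem : ∀ x ∈ points, x ∈ L := by
    intro x hx; rw [← htf] at hx; exact List.mem_toFinset.mp hx
  have hplt : ∀ x ∈ points, p x < 6*s+3 := by
    intro x hx; rw [← hlen]; exact List.idxOf_lt_length_iff.mpr (hmem x hx)
  have hinj : ∀ x ∈ points, ∀ y ∈ points, p x = p y → x = y := by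
    intro x hx y hy h
    exact (List.idxOf_inj (hmem x hx)).mp h
  -- window membership
  have hwin : ∀ x ∈ points, ∀ i : ℕ, i ≤ p x → p x < i + ℓ →
      x ∈ ((L.drop i).take ℓ).toFinset := by
    intro x hx i h1 h2
    apply List.mem_toFinset.mpr
    have hpxlen : p x < L.length := List.idxOf_lt_length_iff.mpr (hmem x hx)
    have hlt : p x - i < ((L.drop i).take ℓ).length := by
      rw [List.length_take, List.length_drop]; omega
    have hget : ((L.drop i).take ℓ)[p x - i]'hlt = x := by
      rw [List.getElem_take, List.getElem_drop]
      have h3 : i + (p x - i) = p x := by omega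
      simp only [h3]
      exact List.getElem_idxOf hpxlen
    rw [← hget]
    exact List.getElem_mem hlt
  -- per-block bound
  have hblock : ∀ b ∈ blocks, ∑ x ∈ b, ∑ y ∈ b, Wt s (p x) (p y) ≤ 0 := by
    intro b hb
    obtain ⟨x, y, z, hxy, hxz, hyz, rfl⟩ := Finset.card_eq_three.mp (hS.1 _ hb).2
    have hbp := (hS.1 _ hb).1
    have hx : x ∈ points := hbp (by simp)
    have hy : y ∈ points := hbp (by simp)
    have hz : z ∈ points := hbp (by simp)
    have dxy : p x ≠ p y := fun h => hxy (hinj x hx y hy h)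
    have dxz : p x ≠ p z := fun h => hxz (hinj x hx z hz h)
    have dyz : p y ≠ p z := fun h => hyz (hinj y hy z hz h)
    have hsp : 2*s+2 + min (p x) (min (p y) (p z)) ≤ max (p x) (max (p y) (p z)) := by
      by_contra hno
      push_neg at hno
      refine hgood (min (p x) (min (p y) (p z))) {x, y, z} hb ?_
      intro w hw
      simp only [Finset.mem_insert, Finset.mem_singleton] at hw
      rcases hw with rfl | rfl | rfl
      · exact hwin w hx _ (by omega) (by omega)
      · exact hwin w hy _ (by omega) (by omega)
      · exact hwin w hz _ (by omega) (by omega)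
    have hxm : x ∉ ({y, z} : Finset α) := by simp [hxy, hxz]
    have hym : y ∉ ({z} : Finset α) := by simp [hyz]
    have expand : ∀ v : α, ∑ w ∈ ({x, y, z} : Finset α), Wt s (p v) (p w)
        = Wt s (p v) (p x) + Wt s (p v) (p y) + Wt s (p v) (p z) := by
      intro v
      rw [show ({x, y, z} : Finset α) = insert x (insert y {z}) from rfl,
        Finset.sum_insert hxm, Finset.sum_insert hym, Finset.sum_singleton]
      ring
    rw [show ({x, y, z} : Finset α) = insert x (insert y {z}) from rfl,
      Finset.sum_insert hxm, Finset.sum_insert hym, Finset.sum_singleton]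
    rw [show (insert x (insert y ({z} : Finset α))) = {x, y, z} from rfl]
    rw [expand x, expand y, expand z]
    have tri := Wt_triple s (p x) (p y) (p z) dxy dxz dyz hsp
    have e1 := Wt_symm s (p x) (p y)
    have e2 := Wt_symm s (p x) (p z)
    have e3 := Wt_symm s (p y) (p z)
    have d1 := Wt_diag s (p x)
    have d2 := Wt_diag s (p y)
    have d3 := Wt_diag s (p z)
    linarith
  -- double counting
  have hdc : ∑ b ∈ blocks, ∑ x ∈ b, ∑ y ∈ b, Wt s (p x) (p y)
      = ∑ x ∈ points, ∑ y ∈ points, Wt s (p x) (p y) := by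
    have h1 : ∀ b ∈ blocks, ∑ x ∈ b, ∑ y ∈ b, Wt s (p x) (p y)
        = ∑ x ∈ points, ∑ y ∈ points,
            (if x ∈ b ∧ y ∈ b then Wt s (p x) (p y) else 0) := by
      intro b hb
      have hbp := (hS.1 _ hb).1
      have hbi : points ∩ b = b := Finset.inter_eq_right.mpr hbp
      have e1 : ∀ x : α, ∑ y ∈ b, Wt s (p x) (p y)
          = ∑ y ∈ points, (if y ∈ b then Wt s (p x) (p y) else 0) := by
        intro x; rw [Finset.sum_ite_mem, hbi]
      have e2 : ∑ x ∈ b, ∑ y ∈ points, (if y ∈ b then Wt s (p x) (p y) else 0)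
          = ∑ x ∈ points, (if x ∈ b then
              ∑ y ∈ points, (if y ∈ b then Wt s (p x) (p y) else 0) else 0) := by
        rw [Finset.sum_ite_mem, hbi]
      rw [Finset.sum_congr rfl (fun x _ => e1 x), e2]
      apply Finset.sum_congr rfl
      intro x _
      by_cases hxb : x ∈ b
      · simp only [if_pos hxb]
        apply Finset.sum_congr rfl
        intro y _
        simp [hxb]
      · simp only [if_neg hxb]
        symm
        apply Finset.sum_eq_zero
        intro y _
        simp [hxb]
    rw [Finset.sum_congr rfl h1, Finset.sum_comm]
    apply Finset.sum_congr rfl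
    intro x hx
    rw [Finset.sum_comm]
    apply Finset.sum_congr rfl
    intro y hy
    rcases eq_or_ne x y with rfl | hxy
    · simp [Wt_diag]
    · obtain ⟨b0, ⟨hb0, hxb0, hyb0⟩, hu⟩ := hS.2 x hx y hy hxy
      have hfe : blocks.filter (fun b => x ∈ b ∧ y ∈ b) = {b0} := by
        ext b
        simp only [Finset.mem_filter, Finset.mem_singleton]
        constructor
        · rintro ⟨hb, hxb, hyb⟩; exact hu b ⟨hb, hxb, hyb⟩
        · rintro rfl; exact ⟨hb0, hxb0, hyb0⟩
      rw [← Finset.sum_filter, hfe, Finset.sum_singleton]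
  -- reindex to range
  have hinj' : ∀ x ∈ points, ∀ y ∈ points, p x = p y → x = y := hinj
  have himg : points.image p = Finset.range (6*s+3) := by
    apply Finset.eq_of_subset_of_card_le
    · intro i hi
      obtain ⟨x, hx, rfl⟩ := Finset.mem_image.mp hi
      exact Finset.mem_range.mpr (hplt x hx)
    · rw [Finset.card_range, Finset.card_image_of_injOn
        (fun a ha b hb h => hinj a ha b hb h), hv]
  have hre : ∑ x ∈ points, ∑ y ∈ points, Wt s (p x) (p y)
      = ∑ i ∈ Finset.range (6*s+3), ∑ j ∈ Finset.range (6*s+3), Wt s i j := by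
    rw [← himg, Finset.sum_image hinj']
    apply Finset.sum_congr rfl
    intro x _
    rw [Finset.sum_image hinj']
  have hle : ∑ b ∈ blocks, ∑ x ∈ b, ∑ y ∈ b, Wt s (p x) (p y) ≤ 0 :=
    Finset.sum_nonpos hblock
  rw [hdc, hre, Wt_total s hs] at hle
  have hpos : (0:ℤ) < 12*(s:ℤ)^2 + 12*(s:ℤ) := by
    have : (1:ℤ) ≤ (s:ℤ) := by exact_mod_cast hs
    nlinarith
  linarith
end

section
/- Every Steiner triple system of order v with v > 3 has a 3-good sequencing. -/
/-!
The sequence is built from the back. A point placed in front of the entries already chosen must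
not form a block with the next two of them, which excludes at most one point of the set `R` of
points still to be placed. When `|R| = 4` it must also not leave a block behind, which excludes
at most one more point, since two blocks never share two points. So a choice exists while
`|R| ≥ 4`; for `|R| = 3` with `R` not a block, the last two choices are made greedily and `R`
itself is the first window.
-/

open Finset

lemma Finset.exists_mem_not_of_card_filter_lt {α : Type*} {s : Finset α} {P : α → Prop}
    [DecidablePred P] (h : #(s.filter P) < #s) : ∃ x ∈ s, ¬ P x := by
  by_contra! hP
  exact h.ne (congrArg card (filter_true_of_mem hP))

section

variable {α : Type*} [DecidableEq α]

def IsPartialTripleSystem (blocks : Finset (Finset α)) : Prop :=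
  (∀ b ∈ blocks, #b = 3) ∧ ∀ b₁ ∈ blocks, ∀ b₂ ∈ blocks, 2 ≤ #(b₁ ∩ b₂) → b₁ = b₂

def WindowsBlockFree (blocks : Finset (Finset α)) (ℓ : ℕ) (L : List α) : Prop :=
  ∀ i : ℕ, ∀ b ∈ blocks, ¬ b ⊆ ((L.drop i).take ℓ).toFinset

def HasGoodPrefix (blocks : Finset (Finset α)) (ℓ : ℕ) (R : Finset α) (s : List α) : Prop :=
  ∃ L : List α, L.Nodup ∧ L.toFinset = R ∧ WindowsBlockFree blocks ℓ (L ++ s)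

lemma Finset.disjoint_erase_toFinset_cons {R : Finset α} {s : List α} (x : α)
    (h : Disjoint R s.toFinset) : Disjoint (R.erase x) (x :: s).toFinset := by
  rw [List.toFinset_cons, disjoint_insert_right]
  exact ⟨notMem_erase x R, h.mono_left (erase_subset x R)⟩

lemma Finset.disjoint_toFinset_take {R : Finset α} {s : List α} (n : ℕ)
    (h : Disjoint R s.toFinset) : Disjoint R (s.take n).toFinset :=
  h.mono_right fun _ hx => List.mem_toFinset.mpr
    (List.mem_of_mem_take (List.mem_toFinset.mp hx))

lemma HasGoodPrefix.of_erase {blocks : Finset (Finset α)} {ℓ : ℕ} {R : Finset α} {s : List α}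
    {x : α} (hx : x ∈ R) (h : HasGoodPrefix blocks ℓ (R.erase x) (x :: s)) :
    HasGoodPrefix blocks ℓ R s := by
  obtain ⟨L, hnd, hL, hgood⟩ := h
  have hxL : x ∉ L := by
    rw [← List.mem_toFinset, hL]
    exact notMem_erase x R
  exact ⟨L ++ [x], List.nodup_append_comm.mpr (List.nodup_cons.mpr ⟨hxL, hnd⟩),
    by simp [hL, insert_erase hx],
    by simpa using hgood⟩

lemma IsSTS.isPartialTripleSystem {points : Finset α} {blocks : Finset (Finset α)}
    (hS : IsSTS points blocks) : IsPartialTripleSystem blocks := by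
  refine ⟨fun b hb => (hS.1 b hb).2, fun b₁ hb₁ b₂ hb₂ h => ?_⟩
  obtain ⟨x, hx, y, hy, hxy⟩ := one_lt_card.mp h
  rw [mem_inter] at hx hy
  exact (hS.2 x ((hS.1 b₁ hb₁).1 hx.1) y ((hS.1 b₁ hb₁).1 hy.1) hxy).unique
    ⟨hb₁, hx.1, hy.1⟩ ⟨hb₂, hx.2, hy.2⟩

namespace IsPartialTripleSystem

variable {blocks : Finset (Finset α)} (hB : IsPartialTripleSystem blocks)
include hB

lemma eq_of_insert_mem {p : Finset α} {x y : α} (hx : x ∉ p) (hxb : insert x p ∈ blocks)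
    (hyb : insert y p ∈ blocks) : x = y := by
  have hp : #p = 2 := by
    have := hB.1 _ hxb
    rw [card_insert_of_notMem hx] at this
    omega
  have hxy : insert x p = insert y p :=
    hB.2 _ hxb _ hyb (hp ▸ card_le_card (subset_inter (subset_insert _ _) (subset_insert _ _)))
  have hx' : x ∈ insert y p := hxy ▸ mem_insert_self x p
  simpa [hx] using hx'

lemma card_filter_insert_mem_le_one {R p : Finset α} (hRp : Disjoint R p) :
    #(R.filter fun x => insert x p ∈ blocks) ≤ 1 :=
  card_le_one.mpr fun x hx y hy => by
    rw [mem_filter] at hx hy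
    exact hB.eq_of_insert_mem (disjoint_left.mp hRp hx.1) hx.2 hy.2

lemma card_filter_erase_mem_le_one (R : Finset α) :
    #(R.filter fun x => R.erase x ∈ blocks) ≤ 1 :=
  card_le_one.mpr fun x hx y hy => by
    rw [mem_filter] at hx hy
    by_contra hxy
    have hyx : y ∈ R.erase x := mem_erase.mpr ⟨Ne.symm hxy, hy.1⟩
    have hR : #R = 4 := by
      have := hB.1 _ hx.2
      rw [card_erase_of_mem hx.1] at this
      omega
    have hinter : 2 ≤ #(R.erase x ∩ R.erase y) :=
      calc 2 = #((R.erase x).erase y) := by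
            rw [card_erase_of_mem hyx, card_erase_of_mem hx.1, hR]
        _ ≤ _ := card_le_card (subset_inter (erase_subset _ _)
            (erase_right_comm (s := R) ▸ erase_subset _ _))
    exact hxy ((erase_inj R hx.1).mp (hB.2 _ hx.2 _ hy.2 hinter))

lemma windowsBlockFree_nil : WindowsBlockFree blocks 3 [] := fun _ b hb hsub => by
  have := hB.1 b hb
  simp_all

lemma windowsBlockFree_cons {x : α} {s : List α} (hx : insert x (s.take 2).toFinset ∉ blocks)
    (hs : WindowsBlockFree blocks 3 s) : WindowsBlockFree blocks 3 (x :: s)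
  | 0, b, hb, hsub => by
    have hwin : #(insert x (s.take 2).toFinset) ≤ #b := by
      have := (List.toFinset_card_le (s.take 2)).trans (List.length_take_le 2 s)
      rw [hB.1 b hb]
      exact (card_insert_le _ _).trans (by omega)
    rw [List.drop_zero, List.take_succ_cons, List.toFinset_cons] at hsub
    exact hx (eq_of_subset_of_card_le hsub hwin ▸ hb)
  | i + 1, b, hb, hsub => hs i b hb hsub

lemma hasGoodPrefix_of_card_eq_three {R : Finset α} {s : List α} (hR : #R = 3) (hRb : R ∉ blocks)
    (hRs : Disjoint R s.toFinset) (hs : WindowsBlockFree blocks 3 s) :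
    HasGoodPrefix blocks 3 R s := by
  obtain ⟨x, hxR, hx⟩ := exists_mem_not_of_card_filter_lt
    ((hB.card_filter_insert_mem_le_one (disjoint_toFinset_take 2 hRs)).trans_lt (by omega))
  have hxs := hB.windowsBlockFree_cons hx hs
  obtain ⟨y, hyR, hy⟩ := exists_mem_not_of_card_filter_lt
    ((hB.card_filter_insert_mem_le_one
      (disjoint_toFinset_take 2 (disjoint_erase_toFinset_cons x hRs))).trans_lt
      (by rw [card_erase_of_mem hxR]; omega))
  obtain ⟨z, hz⟩ := card_eq_one.mp
    (show #((R.erase x).erase y) = 1 by rw [card_erase_of_mem hyR, card_erase_of_mem hxR, hR])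
  have hzyx : insert z ((y :: x :: s).take 2).toFinset = R := by
    rw [← insert_erase hxR, ← insert_erase hyR, hz]
    ext
    simp only [List.take_succ_cons, List.take_zero, List.toFinset_cons, List.toFinset_nil,
      mem_insert, mem_singleton, insert_empty]
    tauto
  refine .of_erase hxR (.of_erase hyR (hz ▸ ?_))
  exact ⟨[z], List.nodup_singleton z, by simp,
    hB.windowsBlockFree_cons (hzyx ▸ hRb) (hB.windowsBlockFree_cons hy hxs)⟩

lemma hasGoodPrefix {R : Finset α} {s : List α} (hR : 3 ≤ #R) (hRb : R ∉ blocks)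
    (hRs : Disjoint R s.toFinset) (hs : WindowsBlockFree blocks 3 s) :
    HasGoodPrefix blocks 3 R s := by
  obtain ⟨n, hn⟩ := Nat.exists_eq_add_of_le' hR
  induction n generalizing R s with
  | zero => exact hB.hasGoodPrefix_of_card_eq_three hn hRb hRs hs
  | succ n ih =>
    have hbad : #(R.filter fun x => insert x (s.take 2).toFinset ∈ blocks ∨ R.erase x ∈ blocks)
        < #R :=
      calc _ ≤ #(R.filter fun x => insert x (s.take 2).toFinset ∈ blocks)
            + #(R.filter fun x => R.erase x ∈ blocks) := by
            rw [filter_or]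
            exact card_union_le _ _
        _ ≤ 1 + 1 := add_le_add (hB.card_filter_insert_mem_le_one (disjoint_toFinset_take 2 hRs))
            (hB.card_filter_erase_mem_le_one R)
        _ < #R := by omega
    obtain ⟨x, hxR, hx⟩ := exists_mem_not_of_card_filter_lt hbad
    rw [not_or] at hx
    have hcard : #(R.erase x) = n + 3 := by rw [card_erase_of_mem hxR, hn]; rfl
    exact .of_erase hxR (ih (by omega) hx.2 (disjoint_erase_toFinset_cons x hRs)
      (hB.windowsBlockFree_cons hx.1 hs) hcard)

theorem exists_isGoodSeq {R : Finset α} (hR : 3 ≤ #R) (hRb : R ∉ blocks) :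
    ∃ L : List α, IsGoodSeq R blocks 3 L := by
  obtain ⟨L, hnd, hL, hgood⟩ := hB.hasGoodPrefix hR hRb (by simp) hB.windowsBlockFree_nil
  exact ⟨L, hnd, hL, by simpa [WindowsBlockFree] using hgood⟩

end IsPartialTripleSystem

end

theorem stmt3 {α : Type*} [DecidableEq α] (points : Finset α) (blocks : Finset (Finset α))
    (hS : IsSTS points blocks) (hv : 3 < points.card) :
    ∃ L : List α, IsGoodSeq points blocks 3 L := by
  have hB := hS.isPartialTripleSystem
  exact hB.exists_isGoodSeq hv.le fun h => by
    have := hB.1 _ h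
    omega
end

section
/- Every Steiner triple system of order v with v > 3 has a cyclic 3-good sequencing. -/
set_option linter.unusedSectionVars false
set_option linter.unusedVariables false
set_option maxHeartbeats 8000000

namespace STSGood

variable {α : Type*} [DecidableEq α] {pts : Finset α} {bls : Finset (Finset α)}

/-- `{x,y,z}` is a block. -/
def Bad (bls : Finset (Finset α)) (x y z : α) : Prop := ({x,y,z} : Finset α) ∈ bls

lemma bad_swap1 {x y z : α} (h : Bad bls x y z) : Bad bls y x z := by
  unfold Bad at *; rwa [Finset.insert_comm]

lemma bad_swap2 {x y z : α} (h : Bad bls x y z) : Bad bls x z y := by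
  unfold Bad at *; rwa [Finset.pair_comm]

lemma bad_rot {x y z : α} (h : Bad bls x y z) : Bad bls y z x := bad_swap2 (bad_swap1 h)

lemma bad_rot2 {x y z : α} (h : Bad bls x y z) : Bad bls z x y := bad_rot (bad_rot h)

lemma bad_swap13 {x y z : α} (h : Bad bls x y z) : Bad bls z y x := bad_swap1 (bad_rot h)

variable (hS : IsSTS pts bls)
include hS

lemma bad_card {x y z : α} (h : Bad bls x y z) : ({x,y,z} : Finset α).card = 3 :=
  (hS.1 _ h).2

lemma bad_ne12 {x y z : α} (h : Bad bls x y z) : x ≠ y := by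
  rintro rfl
  have h3 := bad_card hS h
  rw [Finset.insert_idem] at h3
  have h2 : ({x, z} : Finset α).card ≤ 2 := by
    refine le_trans (Finset.card_insert_le _ _) ?_
    simp
  omega

lemma bad_ne23 {x y z : α} (h : Bad bls x y z) : y ≠ z := bad_ne12 hS (bad_rot h)

lemma bad_ne13 {x y z : α} (h : Bad bls x y z) : x ≠ z := bad_ne12 hS (bad_swap2 h)

lemma bad_mem1 {x y z : α} (h : Bad bls x y z) : x ∈ pts :=
  (hS.1 _ h).1 (by simp)

lemma bad_mem2 {x y z : α} (h : Bad bls x y z) : y ∈ pts := bad_mem1 hS (bad_swap1 h)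

lemma bad_mem3 {x y z : α} (h : Bad bls x y z) : z ∈ pts := bad_mem1 hS (bad_rot2 h)

/-- two blocks through the same pair coincide: uniqueness of the third point. -/
lemma bad_unique {x y z z' : α} (h1 : Bad bls x y z) (h2 : Bad bls x y z') : z = z' := by
  have hx : x ∈ pts := bad_mem1 hS h1
  have hy : y ∈ pts := bad_mem2 hS h1
  have hxy : x ≠ y := bad_ne12 hS h1
  obtain ⟨b, -, hb⟩ := hS.2 x hx y hy hxy
  have e1 : ({x,y,z} : Finset α) = b := hb _ ⟨h1, by simp, by simp⟩
  have e2 : ({x,y,z'} : Finset α) = b := hb _ ⟨h2, by simp, by simp⟩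
  have : z ∈ ({x,y,z'} : Finset α) := by rw [← e2] at e1; rw [← e1]; simp
  simp only [Finset.mem_insert, Finset.mem_singleton] at this
  rcases this with rfl | rfl | rfl
  · exact absurd rfl (bad_ne13 hS h1)
  · exact absurd rfl (bad_ne23 hS h1)
  · rfl

lemma exists_bad {x y : α} (hx : x ∈ pts) (hy : y ∈ pts) (hxy : x ≠ y) :
    ∃ z, Bad bls x y z := by
  obtain ⟨b, ⟨hbB, hxb, hyb⟩, -⟩ := hS.2 x hx y hy hxy
  have hb3 : b.card = 3 := (hS.1 _ hbB).2
  have : ∃ z ∈ b, z ≠ x ∧ z ≠ y := by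
    by_contra hc
    push_neg at hc
    have hsub : b ⊆ {x, y} := by
      intro t ht
      rcases eq_or_ne t x with rfl | h2
      · simp
      · simp [hc t ht h2]
    have := Finset.card_le_card hsub
    have h2 : ({x, y} : Finset α).card ≤ 2 := le_trans (Finset.card_insert_le _ _) (by simp)
    omega
  obtain ⟨z, hzb, hzx, hzy⟩ := this
  refine ⟨z, ?_⟩
  have hsub : ({x,y,z} : Finset α) ⊆ b := by
    intro t ht
    simp only [Finset.mem_insert, Finset.mem_singleton] at ht
    rcases ht with rfl | rfl | rfl <;> assumption
  have hcard : ({x,y,z} : Finset α).card = 3 := by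
    rw [Finset.card_insert_of_notMem (by simp [hxy, Ne.symm hzx]),
      Finset.card_insert_of_notMem (by simp [Ne.symm hzy]), Finset.card_singleton]
  have : ({x,y,z} : Finset α) = b := Finset.eq_of_subset_of_card_le hsub (by omega)
  unfold Bad
  rwa [this]

end STSGood


namespace STSGood

variable {α : Type*} [DecidableEq α] {pts : Finset α} {bls : Finset (Finset α)}

lemma mem_of_getElem?' {l : List α} {i : ℕ} {x : α} (h : l[i]? = some x) : x ∈ l := by
  have hlt : i < l.length := by
    by_contra hc
    simp [List.getElem?_eq_none (Nat.le_of_not_lt hc)] at h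
  have := List.getElem?_eq_getElem hlt
  rw [this] at h
  exact (Option.some_inj.mp h) ▸ List.getElem_mem _

lemma ne_of_nodup_getElem? {l : List α} {i j : ℕ} {x y : α} (hn : l.Nodup)
    (hi : l[i]? = some x) (hj : l[j]? = some y) (hij : i ≠ j) : x ≠ y := by
  rintro rfl
  have hlt : i < l.length := by
    by_contra hc
    simp [List.getElem?_eq_none (Nat.le_of_not_lt hc)] at hi
  exact hij ((List.getElem?_inj hlt hn).mp (hi.trans hj.symm))

/-- no window of three consecutive entries of `L` is a block -/
def GoodL (bls : Finset (Finset α)) (L : List α) : Prop :=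
  ∀ (i : ℕ) (x y z : α), L[i]? = some x → L[i+1]? = some y → L[i+2]? = some z →
    ¬ Bad bls x y z

lemma goodL_short {L : List α} (h : L.length ≤ 2) : GoodL bls L := by
  intro i x y z _ _ h3 _
  have : L[i+2]? = none := List.getElem?_eq_none (by omega)
  rw [this] at h3
  cases h3

/-- a good path, with first two entries `a, a'` and last two `b', b`. -/
structure PathSt (pts : Finset α) (bls : Finset (Finset α)) (p : List α)
    (a a' b b' : α) : Prop where
  nodup : p.Nodup
  sub : ∀ x ∈ p, x ∈ pts
  len2 : 2 ≤ p.length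
  good : GoodL bls p
  ha : p[0]? = some a
  ha' : p[1]? = some a'
  hb : p[p.length - 1]? = some b
  hb' : p[p.length - 2]? = some b'

namespace PathSt

variable {p : List α} {a a' b b' : α} (st : PathSt pts bls p a a' b b')
include st

lemma mema : a ∈ p := mem_of_getElem?' st.ha
lemma mema' : a' ∈ p := mem_of_getElem?' st.ha'
lemma memb : b ∈ p := mem_of_getElem?' st.hb
lemma memb' : b' ∈ p := mem_of_getElem?' st.hb'
lemma amem : a ∈ pts := st.sub a st.mema
lemma a'mem : a' ∈ pts := st.sub a' st.mema'
lemma bmem : b ∈ pts := st.sub b st.memb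
lemma b'mem : b' ∈ pts := st.sub b' st.memb'
lemma nea : a ≠ a' := ne_of_nodup_getElem? st.nodup st.ha st.ha' (by omega)
lemma neb : b' ≠ b := by
  have h2 := st.len2
  exact ne_of_nodup_getElem? st.nodup st.hb' st.hb (by omega)
lemma neab : a ≠ b := by
  have h2 := st.len2
  exact ne_of_nodup_getElem? st.nodup st.ha st.hb (by omega)

/-- extend a good path at the head -/
lemma consExt {z : α} (hz : z ∈ pts) (hznp : z ∉ p) (hw : ¬ Bad bls z a a') :
    PathSt pts bls (z :: p) z a b b' := by
  have h2 := st.len2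
  refine ⟨List.nodup_cons.mpr ⟨hznp, st.nodup⟩, ?_, by simp; omega, ?_, ?_, ?_, ?_, ?_⟩
  · intro x hx
    rcases List.mem_cons.mp hx with rfl | hx
    · exact hz
    · exact st.sub x hx
  · -- goodness
    intro i x y w h1 h2' h3
    match i with
    | 0 =>
      rw [List.getElem?_cons_zero, Option.some_inj] at h1
      rw [List.getElem?_cons_succ] at h2' h3
      rw [st.ha, Option.some_inj] at h2'
      have : p[1]? = some w := h3
      rw [st.ha', Option.some_inj] at this
      subst h1; subst h2'; subst this
      exact hw
    | (i+1) =>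
      rw [List.getElem?_cons_succ] at h1 h2' h3
      exact st.good i x y w h1 h2' h3
  · simp
  · rw [List.getElem?_cons_succ]; exact st.ha
  · have : (z :: p).length - 1 = (p.length - 1) + 1 := by simp; omega
    rw [this, List.getElem?_cons_succ]; exact st.hb
  · have : (z :: p).length - 2 = (p.length - 2) + 1 := by simp; omega
    rw [this, List.getElem?_cons_succ]; exact st.hb'

/-- extend a good path at the tail -/
lemma concatExt {z : α} (hz : z ∈ pts) (hznp : z ∉ p) (hw : ¬ Bad bls b' b z) :
    PathSt pts bls (p ++ [z]) a a' z b := by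
  have h2 := st.len2
  have hlen : (p ++ [z]).length = p.length + 1 := by simp
  refine ⟨?_, ?_, by simp; omega, ?_, ?_, ?_, ?_, ?_⟩
  · rw [List.nodup_append]
    exact ⟨st.nodup, List.nodup_singleton z, by
      intro x hx y hy hxy
      simp only [List.mem_singleton] at hy
      subst hy; subst hxy
      exact hznp hx⟩
  · intro x hx
    rcases List.mem_append.mp hx with hx | hx
    · exact st.sub x hx
    · simp only [List.mem_singleton] at hx; subst hx; exact hz
  · -- goodness
    intro i x y w h1 h2' h3
    rcases Nat.lt_or_ge (i+2) p.length with hlt | hge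
    · rw [List.getElem?_append_left (by omega)] at h1 h2' h3
      exact st.good i x y w h1 h2' h3
    · rcases Nat.lt_or_ge (i+2) (p.length + 1) with hlt2 | hge2
      · -- i + 2 = p.length
        have hi2 : i + 2 = p.length := by omega
        rw [List.getElem?_append_left (by omega)] at h1 h2'
        have hx : x = b' := by
          have : p[p.length - 2]? = some x := by rw [show p.length - 2 = i by omega]; exact h1
          rw [st.hb'] at this; exact (Option.some_inj.mp this).symm
        have hy : y = b := by
          have : p[p.length - 1]? = some y := by rw [show p.length - 1 = i + 1 by omega]; exact h2'
          rw [st.hb] at this; exact (Option.some_inj.mp this).symm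
        have hw' : w = z := by
          have h3' : (p ++ [z])[p.length]? = some w := by rw [← hi2]; exact h3
          rw [List.getElem?_concat_length] at h3'
          exact (Option.some_inj.mp h3').symm
        subst hx; subst hy; subst hw'
        exact hw
      · have : (p ++ [z])[i+2]? = none := List.getElem?_eq_none (by simp; omega)
        rw [this] at h3
        cases h3
  · rw [List.getElem?_append_left (by omega)]; exact st.ha
  · rw [List.getElem?_append_left (by omega)]; exact st.ha'
  · rw [hlen]
    have : p.length + 1 - 1 = p.length := by omega
    rw [this]
    exact List.getElem?_concat_length
  · rw [hlen]
    have : p.length + 1 - 2 = p.length - 1 := by omega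
    rw [this, List.getElem?_append_left (by omega)]
    exact st.hb

end PathSt

end STSGood


namespace STSGood

variable {α : Type*} [DecidableEq α] {pts : Finset α} {bls : Finset (Finset α)}

/-- from goodness of `L` plus the two wrap windows, get goodness of `L ++ L`. -/
lemma goodL_cyc {L : List α} {x0 x1 y1 y2 : α} (hL : GoodL bls L) (h4 : 4 ≤ L.length)
    (e0 : L[0]? = some x0) (e1 : L[1]? = some x1)
    (f1 : L[L.length - 1]? = some y1) (f2 : L[L.length - 2]? = some y2)
    (w1 : ¬ Bad bls y2 y1 x0) (w2 : ¬ Bad bls y1 x0 x1) : GoodL bls (L ++ L) := by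
  intro i x y z h1 h2 h3
  set n := L.length with hn
  rcases Nat.lt_or_ge (i+2) n with hlt | hge
  · rw [List.getElem?_append_left (by omega)] at h1 h2 h3
    exact hL i x y z h1 h2 h3
  · rcases Nat.lt_or_ge (i+2) (2*n) with hlt2 | hge2
    · rcases Nat.lt_or_ge i n with hin | hin
      · -- wrap cases : i = n-2 or i = n-1
        rcases Nat.lt_or_ge (i+1) n with hi1 | hi1
        · -- i = n - 2
          have hi : i = n - 2 := by omega
          rw [List.getElem?_append_left (by omega)] at h1 h2
          rw [List.getElem?_append_right (by omega)] at h3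
          rw [show i + 2 - n = 0 by omega] at h3
          rw [hi, f2] at h1; rw [show i + 1 = n - 1 by omega, f1] at h2
          rw [e0] at h3
          obtain rfl := Option.some_inj.mp h1
          obtain rfl := Option.some_inj.mp h2
          obtain rfl := Option.some_inj.mp h3
          exact w1
        · -- i = n - 1
          have hi : i = n - 1 := by omega
          rw [List.getElem?_append_left (by omega)] at h1
          rw [List.getElem?_append_right (by omega)] at h2 h3
          rw [show i + 1 - n = 0 by omega, e0] at h2
          rw [show i + 2 - n = 1 by omega, e1] at h3
          rw [hi, f1] at h1
          obtain rfl := Option.some_inj.mp h1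
          obtain rfl := Option.some_inj.mp h2
          obtain rfl := Option.some_inj.mp h3
          exact w2
      · -- all three in the second copy
        rw [List.getElem?_append_right (by omega)] at h1 h2 h3
        rw [show i + 1 - n = (i - n) + 1 by omega] at h2
        rw [show i + 2 - n = (i - n) + 2 by omega] at h3
        exact hL (i - n) x y z h1 h2 h3
    · have : (L ++ L)[i+2]? = none := List.getElem?_eq_none (by simp; omega)
      rw [this] at h3
      cases h3

lemma toCyclic (hS : IsSTS pts bls) {L : List α} (h1 : L.Nodup) (h2 : L.toFinset = pts)
    (h3 : GoodL bls (L ++ L)) : IsCyclicGoodSeq pts bls 3 L := by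
  refine ⟨h1, h2, ?_⟩
  intro i b hb hsub
  set M := L ++ L with hM
  have hb3 : b.card = 3 := (hS.1 _ hb).2
  rcases Nat.lt_or_ge (i + 2) M.length with hlt | hge
  · -- a genuine window
    obtain ⟨x, hx⟩ : ∃ x, M[i]? = some x := ⟨M[i]'(by omega), List.getElem?_eq_getElem (by omega)⟩
    obtain ⟨y, hy⟩ : ∃ y, M[i+1]? = some y := ⟨M[i+1]'(by omega), List.getElem?_eq_getElem (by omega)⟩
    obtain ⟨z, hz⟩ : ∃ z, M[i+2]? = some z := ⟨M[i+2]'(by omega), List.getElem?_eq_getElem (by omega)⟩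
    have hwin : ((M.drop i).take 3).toFinset ⊆ {x, y, z} := by
      intro t ht
      rw [List.mem_toFinset] at ht
      obtain ⟨j, hj, hjt⟩ := List.getElem_of_mem ht
      have hj3 : j < 3 := by
        have : ((M.drop i).take 3).length = min 3 (M.drop i).length := List.length_take
        omega
      have : ((M.drop i).take 3)[j]? = some t := by
        rw [List.getElem?_eq_getElem hj]; rw [hjt]
      rw [List.getElem?_take_of_lt hj3, List.getElem?_drop] at this
      interval_cases j
      · rw [Nat.add_zero] at this
        rw [hx] at this; simp [Option.some_inj.mp this]
      · rw [show i + 1 = i + 1 from rfl] at this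
        rw [hy] at this; simp [Option.some_inj.mp this]
      · rw [hz] at this; simp [Option.some_inj.mp this]
    have hbsub : b ⊆ {x, y, z} := hsub.trans hwin
    have hc3 : ({x,y,z} : Finset α).card ≤ 3 := by
      refine le_trans (Finset.card_insert_le _ _) ?_
      have := Finset.card_insert_le y ({z} : Finset α)
      simp at *; omega
    have hbe : b = {x,y,z} := Finset.eq_of_subset_of_card_le hbsub (by omega)
    have : Bad bls x y z := by unfold Bad; rw [← hbe]; exact hb
    exact h3 i x y z hx hy hz this
  · -- the window is too short to contain a block
    have hlen : ((M.drop i).take 3).length ≤ 2 := by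
      have h1 : ((M.drop i).take 3).length = min 3 (M.drop i).length := List.length_take
      have h2 : (M.drop i).length = M.length - i := List.length_drop
      omega
    have : ((M.drop i).take 3).toFinset.card ≤ 2 :=
      le_trans ((M.drop i).take 3).toFinset_card_le hlen
    have := Finset.card_le_card hsub
    omega

/-- close a good path with the three remaining points -/
lemma closeTriple (hS : IsSTS pts bls) {p : List α} {a a' b b' : α}
    (st : PathSt pts bls p a a' b b') {u1 u2 u3 : α}
    (hu : pts \ p.toFinset = {u1, u2, u3})
    (h12 : u1 ≠ u2) (h13 : u1 ≠ u3) (h23 : u2 ≠ u3)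
    (c1 : ¬ Bad bls b' b u1) (c2 : ¬ Bad bls b u1 u2) (c3 : ¬ Bad bls u1 u2 u3)
    (c4 : ¬ Bad bls u2 u3 a) (c5 : ¬ Bad bls u3 a a') :
    ∃ L, IsCyclicGoodSeq pts bls 3 L := by
  have hmem : ∀ t, t ∈ ({u1,u2,u3} : Finset α) → t ∈ pts ∧ t ∉ p := by
    intro t ht
    rw [← hu, Finset.mem_sdiff, List.mem_toFinset] at ht
    exact ht
  have hu1 := hmem u1 (by simp); have hu2 := hmem u2 (by simp); have hu3 := hmem u3 (by simp)
  have st1 := st.concatExt hu1.1 hu1.2 c1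
  have st2 := st1.concatExt hu2.1 (by simp [hu2.2, Ne.symm h12]) c2
  have st3 := st2.concatExt hu3.1 (by simp [hu3.2, Ne.symm h13, Ne.symm h23]) c3
  set L := ((p ++ [u1]) ++ [u2]) ++ [u3] with hL
  have hlen : L.length = p.length + 3 := by simp [hL]
  refine ⟨L, toCyclic hS st3.nodup ?_ ?_⟩
  · -- toFinset = pts
    have hTsub : p.toFinset ⊆ pts := fun x hx => st.sub x (List.mem_toFinset.mp hx)
    have : L.toFinset = p.toFinset ∪ {u1, u2, u3} := by
      ext t; simp [hL]
    rw [this, ← hu, Finset.union_sdiff_of_subset hTsub]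
  · have hp2 := st.len2
    have hb4 : L[L.length - 1]? = some u3 := st3.hb
    have hb4' : L[L.length - 2]? = some u2 := st3.hb'
    exact goodL_cyc st3.good (by omega) st3.ha st3.ha' hb4 hb4' c4 c5

end STSGood


namespace STSGood

variable {α : Type*} [DecidableEq α] {pts : Finset α} {bls : Finset (Finset α)}

lemma closePerm (hS : IsSTS pts bls) {p : List α} {a a' b b' : α}
    (st : PathSt pts bls p a a' b b') {z1 z2 z3 u1 u2 u3 : α}
    (hR : pts \ p.toFinset = {z1, z2, z3}) (hRB : ¬ Bad bls z1 z2 z3)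
    (hperm : ({u1,u2,u3} : Finset α) = {z1,z2,z3})
    (h12 : u1 ≠ u2) (h13 : u1 ≠ u3) (h23 : u2 ≠ u3)
    (c1 : ¬ Bad bls b' b u1) (c2 : ¬ Bad bls b u1 u2)
    (c4 : ¬ Bad bls u2 u3 a) (c5 : ¬ Bad bls u3 a a') :
    ∃ L, IsCyclicGoodSeq pts bls 3 L :=
  closeTriple hS st (hR.trans hperm.symm) h12 h13 h23 c1 c2
    (fun hc => hRB (show Bad bls z1 z2 z3 from by unfold Bad at hc ⊢; rwa [hperm] at hc))
    c4 c5

/-- case: g = h, g ∈ R = {g, w', w''} -/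
lemma stepB_coreD (hS : IsSTS pts bls) {p : List α} {a a' b b' : α}
    (st : PathSt pts bls p a a' b b') {z1 z2 z3 g w' w'' : α}
    (hR : pts \ p.toFinset = {z1, z2, z3}) (hRB : ¬ Bad bls z1 z2 z3)
    (hg : Bad bls a a' g) (hh : Bad bls b' b g)
    (hset : ({g, w', w''} : Finset α) = {z1,z2,z3})
    (hgw' : g ≠ w') (hgw'' : g ≠ w'') (hww : w' ≠ w'') :
    ∃ L, IsCyclicGoodSeq pts bls 3 L := by
  have hab := st.neab
  have inner : ¬ Bad bls g w' a → ¬ Bad bls g w'' b → ∃ L, IsCyclicGoodSeq pts bls 3 L := by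
    intro hnP1 hnQ2
    refine closePerm hS st hR hRB (u1 := w'') (u2 := g) (u3 := w')
      ?_ (Ne.symm hgw'') hww.symm hgw' ?_ ?_ ?_ ?_
    · rw [← hset]; ext t; simp; try tauto
    · exact fun hc => (Ne.symm hgw'') (bad_unique hS hc hh)
    · exact fun hc => hnQ2 (bad_swap13 hc)
    · exact hnP1
    · exact fun hc => (Ne.symm hgw') (bad_unique hS (bad_rot hc) hg)
  by_cases hP2 : Bad bls g w'' a
  · refine inner ?_ ?_
    · exact fun hc => hww (bad_unique hS (bad_swap2 hc) (bad_swap2 hP2))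
    · exact fun hc => hab ((bad_unique hS hP2 hc).symm ▸ rfl)
  · by_cases hQ1 : Bad bls g w' b
    · refine inner ?_ ?_
      · exact fun hc => hab (bad_unique hS hc hQ1)
      · exact fun hc => hww (bad_unique hS (bad_swap2 hQ1) (bad_swap2 hc))
    · refine closePerm hS st hR hRB (u1 := w') (u2 := g) (u3 := w'')
        ?_ (Ne.symm hgw') hww hgw'' ?_ ?_ ?_ ?_
      · rw [← hset]; ext t; simp; try tauto
      · exact fun hc => (Ne.symm hgw') (bad_unique hS hc hh)
      · exact fun hc => hQ1 (bad_swap13 hc)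
      · exact hP2
      · exact fun hc => (Ne.symm hgw'') (bad_unique hS (bad_rot hc) hg)

/-- case: g ≠ h, both in R = {g, h, k} -/
lemma stepB_coreE (hS : IsSTS pts bls) {p : List α} {a a' b b' : α}
    (st : PathSt pts bls p a a' b b') {z1 z2 z3 g h k : α}
    (hR : pts \ p.toFinset = {z1, z2, z3}) (hRB : ¬ Bad bls z1 z2 z3)
    (hg : Bad bls a a' g) (hh : Bad bls b' b h) (hgh : g ≠ h)
    (hset : ({g, h, k} : Finset α) = {z1,z2,z3})
    (hkg : k ≠ g) (hkh : k ≠ h)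
    (hstuck : ¬ (Bad bls h k a ∧ Bad bls g k b)) :
    ∃ L, IsCyclicGoodSeq pts bls 3 L := by
  have C1g : ¬ Bad bls b' b g := fun hc => hgh (bad_unique hS hc hh)
  have C5h : ¬ Bad bls h a a' := fun hc => (Ne.symm hgh) (bad_unique hS (bad_rot hc) hg)
  by_cases hA : Bad bls h k a
  · have hA' : ¬ Bad bls g k b := fun hc => hstuck ⟨hA, hc⟩
    by_cases hB : Bad bls k h a
    · refine closePerm hS st hR hRB (u1 := k) (u2 := g) (u3 := h)
        ?_ hkg hkh hgh ?_ ?_ ?_ ?_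
      · rw [← hset]; ext t; simp; try tauto
      · exact fun hc => hkh (bad_unique hS hc hh)
      · exact fun hc => hA' (bad_swap13 hc)
      · exact fun hc => hkg (bad_unique hS (bad_rot hB) (bad_rot hc))
      · exact C5h
    · refine closePerm hS st hR hRB (u1 := g) (u2 := k) (u3 := h)
        ?_ (Ne.symm hkg) hgh hkh ?_ ?_ ?_ ?_
      · rw [← hset]; ext t; simp; try tauto
      · exact C1g
      · exact fun hc => hA' (bad_rot hc)
      · exact hB
      · exact C5h
  · by_cases hB : Bad bls b g h
    · refine closePerm hS st hR hRB (u1 := g) (u2 := k) (u3 := h)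
        ?_ (Ne.symm hkg) hgh hkh ?_ ?_ ?_ ?_
      · rw [← hset]; ext t; simp; try tauto
      · exact C1g
      · exact fun hc => hkh (bad_unique hS hc hB)
      · exact fun hc => hA (bad_swap1 hc)
      · exact C5h
    · refine closePerm hS st hR hRB (u1 := g) (u2 := h) (u3 := k)
        hset hgh (Ne.symm hkg) (Ne.symm hkh) ?_ ?_ ?_ ?_
      · exact C1g
      · exact hB
      · exact hA
      · exact fun hc => hkg (bad_unique hS (bad_rot hc) hg)

/-- case: g ∈ R = {g, w', w''}, h ∉ R; extra hypothesis: ¬ Bad g w'' b -/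
lemma stepB_coreC (hS : IsSTS pts bls) {p : List α} {a a' b b' : α}
    (st : PathSt pts bls p a a' b b') {z1 z2 z3 g h w' w'' : α}
    (hR : pts \ p.toFinset = {z1, z2, z3}) (hRB : ¬ Bad bls z1 z2 z3)
    (hg : Bad bls a a' g) (hh : Bad bls b' b h)
    (hset : ({g, w', w''} : Finset α) = {z1,z2,z3})
    (hww : w' ≠ w'') (hgw' : g ≠ w') (hgw'' : g ≠ w'')
    (hgh : g ≠ h) (hw'h : w' ≠ h) (hw''h : w'' ≠ h)
    (hnb : ¬ Bad bls g w'' b) :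
    ∃ L, IsCyclicGoodSeq pts bls 3 L := by
  by_cases hB : Bad bls w'' w' a
  · refine closePerm hS st hR hRB (u1 := w'') (u2 := g) (u3 := w')
      ?_ (Ne.symm hgw'') hww.symm hgw' ?_ ?_ ?_ ?_
    · rw [← hset]; ext t; simp; try tauto
    · exact fun hc => hw''h (bad_unique hS hc hh)
    · exact fun hc => hnb (bad_swap1 (bad_rot hc))
    · exact fun hc => hgw'' (bad_unique hS (bad_swap2 (bad_swap1 hc)) (bad_swap2 (bad_swap1 hB)))
    · exact fun hc => (Ne.symm hgw') (bad_unique hS (bad_rot hc) hg)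
  · refine closePerm hS st hR hRB (u1 := g) (u2 := w'') (u3 := w')
      ?_ hgw'' hgw' hww.symm ?_ ?_ ?_ ?_
    · rw [← hset]; ext t; simp; try tauto
    · exact fun hc => hgh (bad_unique hS hc hh)
    · exact fun hc => hnb (bad_rot hc)
    · exact hB
    · exact fun hc => (Ne.symm hgw') (bad_unique hS (bad_rot hc) hg)

/-- case: h ∈ R = {h, w', w''}, g ∉ R; extra hypothesis: ¬ Bad h w'' a -/
lemma stepB_coreB (hS : IsSTS pts bls) {p : List α} {a a' b b' : α}
    (st : PathSt pts bls p a a' b b') {z1 z2 z3 g h w' w'' : α}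
    (hR : pts \ p.toFinset = {z1, z2, z3}) (hRB : ¬ Bad bls z1 z2 z3)
    (hg : Bad bls a a' g) (hh : Bad bls b' b h)
    (hset : ({h, w', w''} : Finset α) = {z1,z2,z3})
    (hww : w' ≠ w'') (hhw' : h ≠ w') (hhw'' : h ≠ w'')
    (hhg : h ≠ g) (hw'g : w' ≠ g) (hw''g : w'' ≠ g)
    (hna : ¬ Bad bls h w'' a) :
    ∃ L, IsCyclicGoodSeq pts bls 3 L := by
  by_cases hB : Bad bls b w' h
  · refine closePerm hS st hR hRB (u1 := w') (u2 := w'') (u3 := h)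
      ?_ hww (Ne.symm hhw') (Ne.symm hhw'') ?_ ?_ ?_ ?_
    · rw [← hset]; ext t; simp; try tauto
    · exact fun hc => (Ne.symm hhw') (bad_unique hS hc hh)
    · exact fun hc => hhw'' (bad_unique hS hc hB).symm
    · exact fun hc => hna (bad_swap1 hc)
    · exact fun hc => hhg (bad_unique hS (bad_rot hc) hg)
  · refine closePerm hS st hR hRB (u1 := w') (u2 := h) (u3 := w'')
      ?_ (Ne.symm hhw') hww hhw'' ?_ ?_ ?_ ?_
    · rw [← hset]; ext t; simp; try tauto
    · exact fun hc => (Ne.symm hhw') (bad_unique hS hc hh)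
    · exact hB
    · exact hna
    · exact fun hc => hw''g (bad_unique hS (bad_rot hc) hg)

/-- case: g ∉ R, h ∉ R -/
lemma stepB_coreA (hS : IsSTS pts bls) {p : List α} {a a' b b' : α}
    (st : PathSt pts bls p a a' b b') {z1 z2 z3 g h : α}
    (hR : pts \ p.toFinset = {z1, z2, z3}) (hRB : ¬ Bad bls z1 z2 z3)
    (h12 : z1 ≠ z2) (h13 : z1 ≠ z3) (h23 : z2 ≠ z3)
    (hg : Bad bls a a' g) (hh : Bad bls b' b h)
    (h1g : z1 ≠ g) (h2g : z2 ≠ g) (h3g : z3 ≠ g)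
    (h1h : z1 ≠ h) (h2h : z2 ≠ h) (h3h : z3 ≠ h) :
    ∃ L, IsCyclicGoodSeq pts bls 3 L := by
  have hab := st.neab
  have C1 : ∀ u : α, u ≠ h → ¬ Bad bls b' b u := fun u hu hc => hu (bad_unique hS hc hh)
  have C5 : ∀ u : α, u ≠ g → ¬ Bad bls u a a' :=
    fun u hu hc => hu (bad_unique hS (bad_rot hc) hg)
  by_cases hA : Bad bls z2 z3 a
  · have hnb2 : ¬ Bad bls b z2 z3 :=
      fun hc => hab (bad_unique hS hA (bad_rot hc))
    by_cases hC : Bad bls z3 z1 a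
    · refine closePerm hS st hR hRB (u1 := z3) (u2 := z2) (u3 := z1)
        (by ext t; simp; try tauto) h23.symm h13.symm h12.symm ?_ ?_ ?_ ?_
      · exact C1 z3 h3h
      · exact fun hc => hnb2 (bad_swap2 hc)
      · exact fun hc => h23 (bad_unique hS (bad_rot hc) (bad_rot hC))
      · exact C5 z1 h1g
    · refine closePerm hS st hR hRB (u1 := z2) (u2 := z3) (u3 := z1)
        (by ext t; simp; try tauto) h23 h12.symm h13.symm ?_ ?_ ?_ ?_
      · exact C1 z2 h2h
      · exact hnb2
      · exact hC
      · exact C5 z1 h1g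
  · by_cases hB : Bad bls b z1 z2
    · refine closePerm hS st hR hRB (u1 := z1) (u2 := z3) (u3 := z2)
        (by ext t; simp; try tauto) h13 h12 h23.symm ?_ ?_ ?_ ?_
      · exact C1 z1 h1h
      · exact fun hc => h23 (bad_unique hS hB hc)
      · exact fun hc => hA (bad_swap1 hc)
      · exact C5 z2 h2g
    · refine closePerm hS st hR hRB (u1 := z1) (u2 := z2) (u3 := z3)
        rfl h12 h13 h23 ?_ ?_ ?_ ?_
      · exact C1 z1 h1h
      · exact hB
      · exact hA
      · exact C5 z3 h3g

end STSGood


namespace STSGood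

variable {α : Type*} [DecidableEq α] {pts : Finset α} {bls : Finset (Finset α)}

lemma stepB (hS : IsSTS pts bls) {p : List α} {a a' b b' : α}
    (st : PathSt pts bls p a a' b b') {z1 z2 z3 g h : α}
    (hR : pts \ p.toFinset = {z1, z2, z3})
    (h12 : z1 ≠ z2) (h13 : z1 ≠ z3) (h23 : z2 ≠ z3)
    (hg : Bad bls a a' g) (hh : Bad bls b' b h)
    (hRB : ¬ Bad bls z1 z2 z3)
    (hNS : ∀ k, (k = z1 ∨ k = z2 ∨ k = z3) → k ≠ g → k ≠ h → g ≠ h →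
      (g = z1 ∨ g = z2 ∨ g = z3) → (h = z1 ∨ h = z2 ∨ h = z3) →
      ¬ (Bad bls h k a ∧ Bad bls g k b)) :
    ∃ L, IsCyclicGoodSeq pts bls 3 L := by
  by_cases hgR : g = z1 ∨ g = z2 ∨ g = z3
  · by_cases hhR : h = z1 ∨ h = z2 ∨ h = z3
    · by_cases hgh : g = h
      · -- case D : g = h ∈ R
        have hh' : Bad bls b' b g := by rwa [hgh]
        rcases hgR with e | e | e
        · exact stepB_coreD hS st hR hRB hg hh' (by rw [e])
            (by rw [e]; exact h12) (by rw [e]; exact h13) h23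
        · exact stepB_coreD hS st hR hRB hg hh' (by rw [e]; ext t; simp; try tauto)
            (by rw [e]; exact h12.symm) (by rw [e]; exact h23) h13
        · exact stepB_coreD hS st hR hRB hg hh' (by rw [e]; ext t; simp; try tauto)
            (by rw [e]; exact h13.symm) (by rw [e]; exact h23.symm) h12
      · -- case E : g ≠ h, both in R
        rcases hgR with eg | eg | eg <;> rcases hhR with eh | eh | eh
        · exact absurd (eg.trans eh.symm) hgh
        · -- g=z1, h=z2, k=z3
          refine stepB_coreE hS st hR hRB hg hh hgh
            (by rw [eg, eh]) (by rw [eg]; exact h13.symm) (by rw [eh]; exact h23.symm)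
            (hNS z3 (by tauto) (by rw [eg]; exact h13.symm) (by rw [eh]; exact h23.symm)
              hgh (by tauto) (by tauto))
        · -- g=z1, h=z3, k=z2
          refine stepB_coreE hS st hR hRB hg hh hgh
            (by rw [eg, eh]; ext t; simp; try tauto)
            (by rw [eg]; exact h12.symm) (by rw [eh]; exact h23)
            (hNS z2 (by tauto) (by rw [eg]; exact h12.symm) (by rw [eh]; exact h23)
              hgh (by tauto) (by tauto))
        · -- g=z2, h=z1, k=z3
          refine stepB_coreE hS st hR hRB hg hh hgh
            (by rw [eg, eh]; ext t; simp; try tauto)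
            (by rw [eg]; exact h23.symm) (by rw [eh]; exact h13.symm)
            (hNS z3 (by tauto) (by rw [eg]; exact h23.symm) (by rw [eh]; exact h13.symm)
              hgh (by tauto) (by tauto))
        · exact absurd (eg.trans eh.symm) hgh
        · -- g=z2, h=z3, k=z1
          refine stepB_coreE hS st hR hRB hg hh hgh
            (by rw [eg, eh]; ext t; simp; try tauto)
            (by rw [eg]; exact h12) (by rw [eh]; exact h13)
            (hNS z1 (by tauto) (by rw [eg]; exact h12) (by rw [eh]; exact h13)
              hgh (by tauto) (by tauto))
        · -- g=z3, h=z1, k=z2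
          refine stepB_coreE hS st hR hRB hg hh hgh
            (by rw [eg, eh]; ext t; simp; try tauto)
            (by rw [eg]; exact h23) (by rw [eh]; exact h12.symm)
            (hNS z2 (by tauto) (by rw [eg]; exact h23) (by rw [eh]; exact h12.symm)
              hgh (by tauto) (by tauto))
        · -- g=z3, h=z2, k=z1
          refine stepB_coreE hS st hR hRB hg hh hgh
            (by rw [eg, eh]; ext t; simp; try tauto)
            (by rw [eg]; exact h13) (by rw [eh]; exact h12)
            (hNS z1 (by tauto) (by rw [eg]; exact h13) (by rw [eh]; exact h12)
              hgh (by tauto) (by tauto))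
        · exact absurd (eg.trans eh.symm) hgh
    · -- case C : g ∈ R, h ∉ R
      have hne_h : ∀ u : α, (u = z1 ∨ u = z2 ∨ u = z3) → u ≠ h :=
        fun u hu e => hhR (by rw [← e]; exact hu)
      rcases hgR with e | e | e
      · by_cases hA : Bad bls g z3 b
        · refine stepB_coreC hS st hR hRB hg hh (w' := z3) (w'' := z2)
            (by rw [e]; ext t; simp; try tauto) h23.symm
            (by rw [e]; exact h13) (by rw [e]; exact h12)
            (hne_h g (by tauto)) (hne_h z3 (by tauto)) (hne_h z2 (by tauto)) ?_
          exact fun hc => h23 (bad_unique hS (bad_swap2 hc) (bad_swap2 hA))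
        · exact stepB_coreC hS st hR hRB hg hh (w' := z2) (w'' := z3)
            (by rw [e]) h23
            (by rw [e]; exact h12) (by rw [e]; exact h13)
            (hne_h g (by tauto)) (hne_h z2 (by tauto)) (hne_h z3 (by tauto)) hA
      · by_cases hA : Bad bls g z3 b
        · refine stepB_coreC hS st hR hRB hg hh (w' := z3) (w'' := z1)
            (by rw [e]; ext t; simp; try tauto) h13.symm
            (by rw [e]; exact h23) (by rw [e]; exact h12.symm)
            (hne_h g (by tauto)) (hne_h z3 (by tauto)) (hne_h z1 (by tauto)) ?_
          exact fun hc => h13 (bad_unique hS (bad_swap2 hc) (bad_swap2 hA))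
        · exact stepB_coreC hS st hR hRB hg hh (w' := z1) (w'' := z3)
            (by rw [e]; ext t; simp; try tauto) h13
            (by rw [e]; exact h12.symm) (by rw [e]; exact h23)
            (hne_h g (by tauto)) (hne_h z1 (by tauto)) (hne_h z3 (by tauto)) hA
      · by_cases hA : Bad bls g z2 b
        · refine stepB_coreC hS st hR hRB hg hh (w' := z2) (w'' := z1)
            (by rw [e]; ext t; simp; try tauto) h12.symm
            (by rw [e]; exact h23.symm) (by rw [e]; exact h13.symm)
            (hne_h g (by tauto)) (hne_h z2 (by tauto)) (hne_h z1 (by tauto)) ?_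
          exact fun hc => h12 (bad_unique hS (bad_swap2 hc) (bad_swap2 hA))
        · exact stepB_coreC hS st hR hRB hg hh (w' := z1) (w'' := z2)
            (by rw [e]; ext t; simp; try tauto) h12
            (by rw [e]; exact h13.symm) (by rw [e]; exact h23.symm)
            (hne_h g (by tauto)) (hne_h z1 (by tauto)) (hne_h z2 (by tauto)) hA
  · by_cases hhR : h = z1 ∨ h = z2 ∨ h = z3
    · -- case B : h ∈ R, g ∉ R
      have hne_g : ∀ u : α, (u = z1 ∨ u = z2 ∨ u = z3) → u ≠ g :=
        fun u hu e => hgR (by rw [← e]; exact hu)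
      rcases hhR with e | e | e
      · by_cases hA : Bad bls h z3 a
        · refine stepB_coreB hS st hR hRB hg hh (w' := z3) (w'' := z2)
            (by rw [e]; ext t; simp; try tauto) h23.symm
            (by rw [e]; exact h13) (by rw [e]; exact h12)
            (hne_g h (by tauto)) (hne_g z3 (by tauto)) (hne_g z2 (by tauto)) ?_
          exact fun hc => h23 (bad_unique hS (bad_swap2 hc) (bad_swap2 hA))
        · exact stepB_coreB hS st hR hRB hg hh (w' := z2) (w'' := z3)
            (by rw [e]) h23
            (by rw [e]; exact h12) (by rw [e]; exact h13)
            (hne_g h (by tauto)) (hne_g z2 (by tauto)) (hne_g z3 (by tauto)) hA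
      · by_cases hA : Bad bls h z3 a
        · refine stepB_coreB hS st hR hRB hg hh (w' := z3) (w'' := z1)
            (by rw [e]; ext t; simp; try tauto) h13.symm
            (by rw [e]; exact h23) (by rw [e]; exact h12.symm)
            (hne_g h (by tauto)) (hne_g z3 (by tauto)) (hne_g z1 (by tauto)) ?_
          exact fun hc => h13 (bad_unique hS (bad_swap2 hc) (bad_swap2 hA))
        · exact stepB_coreB hS st hR hRB hg hh (w' := z1) (w'' := z3)
            (by rw [e]; ext t; simp; try tauto) h13
            (by rw [e]; exact h12.symm) (by rw [e]; exact h23)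
            (hne_g h (by tauto)) (hne_g z1 (by tauto)) (hne_g z3 (by tauto)) hA
      · by_cases hA : Bad bls h z2 a
        · refine stepB_coreB hS st hR hRB hg hh (w' := z2) (w'' := z1)
            (by rw [e]; ext t; simp; try tauto) h12.symm
            (by rw [e]; exact h23.symm) (by rw [e]; exact h13.symm)
            (hne_g h (by tauto)) (hne_g z2 (by tauto)) (hne_g z1 (by tauto)) ?_
          exact fun hc => h12 (bad_unique hS (bad_swap2 hc) (bad_swap2 hA))
        · exact stepB_coreB hS st hR hRB hg hh (w' := z1) (w'' := z2)
            (by rw [e]; ext t; simp; try tauto) h12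
            (by rw [e]; exact h13.symm) (by rw [e]; exact h23.symm)
            (hne_g h (by tauto)) (hne_g z1 (by tauto)) (hne_g z2 (by tauto)) hA
    · -- case A
      have hne_h : ∀ u : α, (u = z1 ∨ u = z2 ∨ u = z3) → u ≠ h :=
        fun u hu e => hhR (by rw [← e]; exact hu)
      have hne_g : ∀ u : α, (u = z1 ∨ u = z2 ∨ u = z3) → u ≠ g :=
        fun u hu e => hgR (by rw [← e]; exact hu)
      exact stepB_coreA hS st hR hRB h12 h13 h23 hg hh
        (hne_g z1 (by tauto)) (hne_g z2 (by tauto)) (hne_g z3 (by tauto))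
        (hne_h z1 (by tauto)) (hne_h z2 (by tauto)) (hne_h z3 (by tauto))

end STSGood


namespace STSGood

variable {α : Type*} [DecidableEq α] {pts : Finset α} {bls : Finset (Finset α)}

/-- extend at the tail by `z` and finish via stepB -/
lemma stepA_tail (hS : IsSTS pts bls) {p : List α} {a a' b b' : α}
    (st : PathSt pts bls p a a' b b') {g z w1 w2 w3 : α}
    (hR4 : pts \ p.toFinset = insert z {w1, w2, w3})
    (hz1 : z ≠ w1) (hz2 : z ≠ w2) (hz3 : z ≠ w3)
    (h12 : w1 ≠ w2) (h13 : w1 ≠ w3) (h23 : w2 ≠ w3)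
    (hg : Bad bls a a' g)
    (hvalid : ¬ Bad bls b' b z) (hRB' : ¬ Bad bls w1 w2 w3)
    (hns : ∀ h' k, Bad bls b z h' → (k = w1 ∨ k = w2 ∨ k = w3) → k ≠ g → k ≠ h' →
      g ≠ h' → (g = w1 ∨ g = w2 ∨ g = w3) → (h' = w1 ∨ h' = w2 ∨ h' = w3) →
      ¬ (Bad bls h' k a ∧ Bad bls g k z)) :
    ∃ L, IsCyclicGoodSeq pts bls 3 L := by
  have hz : z ∈ pts \ p.toFinset := by rw [hR4]; simp
  have hzp : z ∉ p := fun hc => (Finset.mem_sdiff.mp hz).2 (List.mem_toFinset.mpr hc)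
  have st' := st.concatExt (Finset.mem_sdiff.mp hz).1 hzp hvalid
  have hR' : pts \ (p ++ [z]).toFinset = {w1, w2, w3} := by
    have h1 : (p ++ [z]).toFinset = insert z p.toFinset := by
      ext t; simp [or_comm]
    rw [h1, Finset.sdiff_insert, hR4, Finset.erase_insert (by simp [hz1, hz2, hz3])]
  have hbz : b ≠ z := by rintro rfl; exact hzp st.memb
  obtain ⟨h', hh'⟩ := exists_bad hS st.bmem (Finset.mem_sdiff.mp hz).1 hbz
  exact stepB hS st' hR' h12 h13 h23 hg hh' hRB'
    (fun k hk hkg hkh' hgh' hgm hh'm => hns h' k hh' hk hkg hkh' hgh' hgm hh'm)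

/-- extend at the head by `z` and finish via stepB -/
lemma stepA_head (hS : IsSTS pts bls) {p : List α} {a a' b b' : α}
    (st : PathSt pts bls p a a' b b') {h z w1 w2 w3 : α}
    (hR4 : pts \ p.toFinset = insert z {w1, w2, w3})
    (hz1 : z ≠ w1) (hz2 : z ≠ w2) (hz3 : z ≠ w3)
    (h12 : w1 ≠ w2) (h13 : w1 ≠ w3) (h23 : w2 ≠ w3)
    (hh : Bad bls b' b h)
    (hvalid : ¬ Bad bls z a a') (hRB' : ¬ Bad bls w1 w2 w3)
    (hns : ∀ g' k, Bad bls z a g' → (k = w1 ∨ k = w2 ∨ k = w3) → k ≠ g' → k ≠ h →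
      g' ≠ h → (g' = w1 ∨ g' = w2 ∨ g' = w3) → (h = w1 ∨ h = w2 ∨ h = w3) →
      ¬ (Bad bls h k z ∧ Bad bls g' k b)) :
    ∃ L, IsCyclicGoodSeq pts bls 3 L := by
  have hz : z ∈ pts \ p.toFinset := by rw [hR4]; simp
  have hzp : z ∉ p := fun hc => (Finset.mem_sdiff.mp hz).2 (List.mem_toFinset.mpr hc)
  have st' := st.consExt (Finset.mem_sdiff.mp hz).1 hzp hvalid
  have hR' : pts \ (z :: p).toFinset = {w1, w2, w3} := by
    have h1 : (z :: p).toFinset = insert z p.toFinset := by simp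
    rw [h1, Finset.sdiff_insert, hR4, Finset.erase_insert (by simp [hz1, hz2, hz3])]
  have haz : z ≠ a := by rintro rfl; exact hzp st.mema
  obtain ⟨g', hg'⟩ := exists_bad hS (Finset.mem_sdiff.mp hz).1 st.amem haz
  exact stepB hS st' hR' h12 h13 h23 hg' hh hRB'
    (fun k hk hkg' hkh hg'h hg'm hhm => hns g' k hg' hk hkg' hkh hg'h hg'm hhm)

/-- case IVb : g = h ∈ Q, and there is a block {g, y1, y2} inside Q -/
lemma stepA_IVb (hS : IsSTS pts bls) {p : List α} {a a' b b' : α}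
    (st : PathSt pts bls p a a' b b') {g y1 y2 d : α}
    (hQ : pts \ p.toFinset = insert y1 {g, y2, d})
    (hg : Bad bls a a' g) (hh : Bad bls b' b g)
    (P : Bad bls g y1 y2)
    (hgy1 : g ≠ y1) (hgy2 : g ≠ y2) (hgd : g ≠ d)
    (hy12 : y1 ≠ y2) (hy1d : y1 ≠ d) (hy2d : y2 ≠ d) :
    ∃ L, IsCyclicGoodSeq pts bls 3 L := by
  have hRB' : ¬ Bad bls g y2 d :=
    fun hc => hy1d (bad_unique hS (bad_swap2 P) hc)
  by_cases hcond : Bad bls b y1 d ∧ Bad bls d y2 a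
  · -- head step with y1
    refine stepA_head hS st (z := y1) (w1 := g) (w2 := y2) (w3 := d) hQ
      (Ne.symm hgy1) hy12 hy1d hgy2 hgd hy2d hh ?_ hRB' ?_
    · exact fun hc => (Ne.symm hgy1) (bad_unique hS (bad_rot hc) hg)
    · intro g' k hg' hk hkg' hkg hg'g hg'm hgm hbad
      obtain ⟨HA, HB⟩ := hbad
      -- HA : Bad g k y1, k ∈ {g, y2, d}, k ≠ g
      rcases hk with rfl | rfl | rfl
      · exact hkg rfl
      · -- k = y2 : g' = d, blocks {y1,a,d} and {d,y2,a} share {a,d}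
        have hg'd : g' = d := by
          rcases hg'm with e | e | e
          · exact absurd e hg'g
          · exact absurd e.symm hkg'
          · exact e
        subst hg'd
        exact hy12 (bad_unique hS (bad_rot hg') (bad_rot2 hcond.2))
      · -- k = d : Bad g d y1 contradicts P via pair (g, y1)
        exact hy2d (bad_unique hS P (bad_swap2 HA))
  · -- tail step with y1
    refine stepA_tail hS st (z := y1) (w1 := g) (w2 := y2) (w3 := d) hQ
      (Ne.symm hgy1) hy12 hy1d hgy2 hgd hy2d hg ?_ hRB' ?_
    · exact fun hc => (Ne.symm hgy1) (bad_unique hS hc hh)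
    · intro h' k hh' hk hkg hkh' hgh' hgm hh'm hbad
      obtain ⟨HA, HB⟩ := hbad
      -- HB : Bad g k y1
      rcases hk with rfl | rfl | rfl
      · exact hkg rfl
      · -- k = y2 : then h' = d, so Bad b y1 d and Bad d y2 a
        have hh'd : h' = d := by
          rcases hh'm with e | e | e
          · exact absurd e.symm hgh'
          · exact absurd e.symm hkh'
          · exact e
        subst hh'd
        exact hcond ⟨hh', HA⟩
      · -- k = d : Bad g d y1 contradicts P
        exact hy2d (bad_unique hS P (bad_swap2 HB))

/-- case IV : g = h ∈ Q = insert g {c1,c2,c3} -/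
lemma stepA_caseIV (hS : IsSTS pts bls) {p : List α} {a a' b b' : α}
    (st : PathSt pts bls p a a' b b') {g c1 c2 c3 : α}
    (hQ : pts \ p.toFinset = insert g {c1, c2, c3})
    (hg : Bad bls a a' g) (hh : Bad bls b' b g)
    (hgc1 : g ≠ c1) (hgc2 : g ≠ c2) (hgc3 : g ≠ c3)
    (h12 : c1 ≠ c2) (h13 : c1 ≠ c3) (h23 : c2 ≠ c3) :
    ∃ L, IsCyclicGoodSeq pts bls 3 L := by
  by_cases P12 : Bad bls g c1 c2
  · exact stepA_IVb hS st (y1 := c1) (y2 := c2) (d := c3)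
      (by rw [hQ]; ext t; simp; try tauto) hg hh P12 hgc1 hgc2 hgc3 h12 h13 h23
  · by_cases P13 : Bad bls g c1 c3
    · exact stepA_IVb hS st (y1 := c1) (y2 := c3) (d := c2)
        (by rw [hQ]; ext t; simp; try tauto) hg hh P13 hgc1 hgc3 hgc2 h13 h12 h23.symm
    · by_cases P23 : Bad bls g c2 c3
      · exact stepA_IVb hS st (y1 := c2) (y2 := c3) (d := c1)
          (by rw [hQ]; ext t; simp; try tauto) hg hh P23 hgc2 hgc3 hgc1 h23 h12.symm h13.symm
      · -- IVa : no pair of the c's forms a block with g; tail step with c1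
        refine stepA_tail hS st (z := c1) (w1 := g) (w2 := c2) (w3 := c3)
          (by rw [hQ]; ext t; simp; try tauto)
          (Ne.symm hgc1) h12 h13 hgc2 hgc3 h23 hg ?_ P23 ?_
        · exact fun hc => (Ne.symm hgc1) (bad_unique hS hc hh)
        · intro h' k hh' hk hkg hkh' hgh' hgm hh'm hbad
          obtain ⟨HA, HB⟩ := hbad
          rcases hk with rfl | rfl | rfl
          · exact hkg rfl
          · exact P12 (bad_swap2 HB)
          · exact P13 (bad_swap2 HB)

/-- case III : g ≠ h, both in Q -/
lemma stepA_caseIII (hS : IsSTS pts bls) {p : List α} {a a' b b' : α}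
    (st : PathSt pts bls p a a' b b') {g h r s : α}
    (hQ : pts \ p.toFinset = insert g (insert h {r, s}))
    (hg : Bad bls a a' g) (hh : Bad bls b' b h)
    (hgh : g ≠ h) (hgr : g ≠ r) (hgs : g ≠ s)
    (hhr : h ≠ r) (hhs : h ≠ s) (hrs : r ≠ s) :
    ∃ L, IsCyclicGoodSeq pts bls 3 L := by
  by_cases hB : Bad bls h r s
  · -- head step with h
    refine stepA_head hS st (z := h) (w1 := g) (w2 := r) (w3 := s)
      (by rw [hQ]; ext t; simp; try tauto)
      (Ne.symm hgh) hhr hhs hgr hgs hrs hh ?_ ?_ ?_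
    · exact fun hc => (Ne.symm hgh) (bad_unique hS (bad_rot hc) hg)
    · exact fun hc => hgh (bad_unique hS (bad_rot hc) (bad_rot hB))
    · intro g' k hg' hk hkg' hkh hg'h hg'm hhm hbad
      rcases hhm with e | e | e
      · exact hgh e.symm
      · exact hhr e
      · exact hhs e
  · -- tail step with g
    refine stepA_tail hS st (z := g) (w1 := h) (w2 := r) (w3 := s)
      (by rw [hQ])
      hgh hgr hgs hhr hhs hrs hg ?_ hB ?_
    · exact fun hc => hgh (bad_unique hS hc hh)
    · intro h' k hh' hk hkg hkh' hgh' hgm hh'm hbad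
      rcases hgm with e | e | e
      · exact hgh e
      · exact hgr e
      · exact hgs e

end STSGood


namespace STSGood

variable {α : Type*} [DecidableEq α] {pts : Finset α} {bls : Finset (Finset α)}

/-- case I : g ∉ Q; pick a suitable z and extend at the tail. -/
lemma stepA_selTail (hS : IsSTS pts bls) {p : List α} {a a' b b' : α}
    (st : PathSt pts bls p a a' b b') {g h q1 q2 q3 q4 : α}
    (hR : pts \ p.toFinset = {q1, q2, q3, q4})
    (hg : Bad bls a a' g) (hh : Bad bls b' b h)
    (h12 : q1 ≠ q2) (h13 : q1 ≠ q3) (h14 : q1 ≠ q4)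
    (h23 : q2 ≠ q3) (h24 : q2 ≠ q4) (h34 : q3 ≠ q4)
    (hg1 : g ≠ q1) (hg2 : g ≠ q2) (hg3 : g ≠ q3) (hg4 : g ≠ q4) :
    ∃ L, IsCyclicGoodSeq pts bls 3 L := by
  have hns : ∀ w1 w2 w3 : α,
      (w1 = q1 ∨ w1 = q2 ∨ w1 = q3 ∨ w1 = q4) →
      (w2 = q1 ∨ w2 = q2 ∨ w2 = q3 ∨ w2 = q4) →
      (w3 = q1 ∨ w3 = q2 ∨ w3 = q3 ∨ w3 = q4) →
      ∀ (z h' k : α), Bad bls b z h' → (k = w1 ∨ k = w2 ∨ k = w3) → k ≠ g → k ≠ h' →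
      g ≠ h' → (g = w1 ∨ g = w2 ∨ g = w3) → (h' = w1 ∨ h' = w2 ∨ h' = w3) →
      ¬ (Bad bls h' k a ∧ Bad bls g k z) := by
    intro w1 w2 w3 hw1 hw2 hw3 z h' k _ _ _ _ _ hgm _ _
    rcases hgm with e | e | e <;> subst e
    · rcases hw1 with e | e | e | e <;> simp_all
    · rcases hw2 with e | e | e | e <;> simp_all
    · rcases hw3 with e | e | e | e <;> simp_all
  by_cases hB1 : Bad bls q2 q3 q4
  · have hB2 : ¬ Bad bls q1 q3 q4 :=
      fun hc => h12.symm (bad_unique hS (bad_rot hB1) (bad_rot hc))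
    have hB3 : ¬ Bad bls q1 q2 q4 :=
      fun hc => h13 (bad_unique hS (bad_rot hc) (bad_swap2 hB1))
    by_cases hzh : q2 = h
    · -- use z = q3, w's = (q1, q2, q4)
      have hq3h : q3 ≠ h := fun e => h23 (e.trans hzh.symm).symm
      refine stepA_tail hS st (z := q3) (w1 := q1) (w2 := q2) (w3 := q4)
        (by rw [hR]; ext t; simp; try tauto)
        h13.symm h23.symm h34 h12 h14 h24 hg
        (fun hc => hq3h (bad_unique hS hc hh)) hB3
        (hns q1 q2 q4 (by tauto) (by tauto) (by tauto) q3)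
    · -- use z = q2, w's = (q1, q3, q4)
      refine stepA_tail hS st (z := q2) (w1 := q1) (w2 := q3) (w3 := q4)
        (by rw [hR]; ext t; simp; try tauto)
        h12.symm h23 h24 h13 h14 h34 hg
        (fun hc => hzh (bad_unique hS hc hh)) hB2
        (hns q1 q3 q4 (by tauto) (by tauto) (by tauto) q2)
  · by_cases hzh : q1 = h
    · by_cases hB2 : Bad bls q1 q3 q4
      · -- use z = q3, w's = (q1, q2, q4); need ¬ Bad q1 q2 q4
        have hB3 : ¬ Bad bls q1 q2 q4 :=
          fun hc => h23 (bad_unique hS (bad_swap2 hB2) (bad_swap2 hc)).symm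
        have hq3h : q3 ≠ h := fun e => h13 (hzh.trans e.symm)
        refine stepA_tail hS st (z := q3) (w1 := q1) (w2 := q2) (w3 := q4)
          (by rw [hR]; ext t; simp; try tauto)
          h13.symm h23.symm h34 h12 h14 h24 hg
          (fun hc => hq3h (bad_unique hS hc hh)) hB3
          (hns q1 q2 q4 (by tauto) (by tauto) (by tauto) q3)
      · -- use z = q2, w's = (q1, q3, q4)
        have hq2h : q2 ≠ h := fun e => h12 (hzh.trans e.symm)
        refine stepA_tail hS st (z := q2) (w1 := q1) (w2 := q3) (w3 := q4)
          (by rw [hR]; ext t; simp; try tauto)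
          h12.symm h23 h24 h13 h14 h34 hg
          (fun hc => hq2h (bad_unique hS hc hh)) hB2
          (hns q1 q3 q4 (by tauto) (by tauto) (by tauto) q2)
    · -- use z = q1, w's = (q2, q3, q4)
      refine stepA_tail hS st (z := q1) (w1 := q2) (w2 := q3) (w3 := q4)
        (by rw [hR])
        h12 h13 h14 h23 h24 h34 hg
        (fun hc => hzh (bad_unique hS hc hh)) hB1
        (hns q2 q3 q4 (by tauto) (by tauto) (by tauto) q1)

/-- case II : g ∈ Q = insert g {c1,c2,c3}, h ∉ Q; pick a suitable z and extend at the head. -/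
lemma stepA_selHead (hS : IsSTS pts bls) {p : List α} {a a' b b' : α}
    (st : PathSt pts bls p a a' b b') {g h c1 c2 c3 : α}
    (hQ : pts \ p.toFinset = insert g {c1, c2, c3})
    (hg : Bad bls a a' g) (hh : Bad bls b' b h)
    (hgc1 : g ≠ c1) (hgc2 : g ≠ c2) (hgc3 : g ≠ c3)
    (h12 : c1 ≠ c2) (h13 : c1 ≠ c3) (h23 : c2 ≠ c3)
    (hhg : h ≠ g) (hhc1 : h ≠ c1) (hhc2 : h ≠ c2) (hhc3 : h ≠ c3) :
    ∃ L, IsCyclicGoodSeq pts bls 3 L := by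
  have hns : ∀ w1 w2 w3 : α,
      (h ≠ w1) → (h ≠ w2) → (h ≠ w3) →
      ∀ (z g' k : α), Bad bls z a g' → (k = w1 ∨ k = w2 ∨ k = w3) → k ≠ g' → k ≠ h →
      g' ≠ h → (g' = w1 ∨ g' = w2 ∨ g' = w3) → (h = w1 ∨ h = w2 ∨ h = w3) →
      ¬ (Bad bls h k z ∧ Bad bls g' k b) := by
    intro w1 w2 w3 hw1 hw2 hw3 z g' k _ _ _ _ _ _ hhm _
    rcases hhm with e | e | e
    · exact hw1 e
    · exact hw2 e
    · exact hw3 e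
  by_cases hB1 : Bad bls g c2 c3
  · -- z = c2, w's = (g, c1, c3); need ¬ Bad g c1 c3
    have hB2 : ¬ Bad bls g c1 c3 :=
      fun hc => h12.symm (bad_unique hS (bad_swap2 hB1) (bad_swap2 hc))
    refine stepA_head hS st (z := c2) (w1 := g) (w2 := c1) (w3 := c3)
      (by rw [hQ]; ext t; simp; try tauto)
      (Ne.symm hgc2) h12.symm h23 hgc1 hgc3 h13 hh
      (fun hc => (Ne.symm hgc2) (bad_unique hS (bad_rot hc) hg)) hB2
      (hns g c1 c3 hhg hhc1 hhc3 c2)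
  · -- z = c1, w's = (g, c2, c3)
    refine stepA_head hS st (z := c1) (w1 := g) (w2 := c2) (w3 := c3)
      (by rw [hQ]; ext t; simp; try tauto)
      (Ne.symm hgc1) h12 h13 hgc2 hgc3 h23 hh
      (fun hc => (Ne.symm hgc1) (bad_unique hS (bad_rot hc) hg)) hB1
      (hns g c2 c3 hhg hhc2 hhc3 c1)

lemma stepA (hS : IsSTS pts bls) {p : List α} {a a' b b' : α}
    (st : PathSt pts bls p a a' b b') {q1 q2 q3 q4 : α}
    (hR : pts \ p.toFinset = {q1, q2, q3, q4})
    (h12 : q1 ≠ q2) (h13 : q1 ≠ q3) (h14 : q1 ≠ q4)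
    (h23 : q2 ≠ q3) (h24 : q2 ≠ q4) (h34 : q3 ≠ q4) :
    ∃ L, IsCyclicGoodSeq pts bls 3 L := by
  obtain ⟨g, hg⟩ := exists_bad hS st.amem st.a'mem st.nea
  obtain ⟨h, hh⟩ := exists_bad hS st.b'mem st.bmem st.neb
  by_cases hgQ : g = q1 ∨ g = q2 ∨ g = q3 ∨ g = q4
  · by_cases hhQ : h = q1 ∨ h = q2 ∨ h = q3 ∨ h = q4
    · by_cases hgh : g = h
      · -- case IV
        have hh' : Bad bls b' b g := by rwa [hgh]
        rcases hgQ with e | e | e | e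
        · exact stepA_caseIV hS st (c1 := q2) (c2 := q3) (c3 := q4)
            (by rw [hR, e]) hg hh'
            (by rw [e]; exact h12) (by rw [e]; exact h13) (by rw [e]; exact h14) h23 h24 h34
        · exact stepA_caseIV hS st (c1 := q1) (c2 := q3) (c3 := q4)
            (by rw [hR, e]; ext t; simp; try tauto) hg hh'
            (by rw [e]; exact h12.symm) (by rw [e]; exact h23) (by rw [e]; exact h24) h13 h14 h34
        · exact stepA_caseIV hS st (c1 := q1) (c2 := q2) (c3 := q4)
            (by rw [hR, e]; ext t; simp; try tauto) hg hh'
            (by rw [e]; exact h13.symm) (by rw [e]; exact h23.symm) (by rw [e]; exact h34) h12 h14 h24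
        · exact stepA_caseIV hS st (c1 := q1) (c2 := q2) (c3 := q3)
            (by rw [hR, e]; ext t; simp; try tauto) hg hh'
            (by rw [e]; exact h14.symm) (by rw [e]; exact h24.symm) (by rw [e]; exact h34.symm) h12 h13 h23
      · -- case III
        rcases hgQ with eg | eg | eg | eg <;> rcases hhQ with eh | eh | eh | eh
        · exact absurd (eg.trans eh.symm) hgh
        · exact stepA_caseIII hS st (r := q3) (s := q4)
            (by rw [hR, eg, eh]) hg hh hgh
            (by rw [eg]; exact h13) (by rw [eg]; exact h14)
            (by rw [eh]; exact h23) (by rw [eh]; exact h24) h34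
        · exact stepA_caseIII hS st (r := q2) (s := q4)
            (by rw [hR, eg, eh]; ext t; simp; try tauto) hg hh hgh
            (by rw [eg]; exact h12) (by rw [eg]; exact h14)
            (by rw [eh]; exact h23.symm) (by rw [eh]; exact h34) h24
        · exact stepA_caseIII hS st (r := q2) (s := q3)
            (by rw [hR, eg, eh]; ext t; simp; try tauto) hg hh hgh
            (by rw [eg]; exact h12) (by rw [eg]; exact h13)
            (by rw [eh]; exact h24.symm) (by rw [eh]; exact h34.symm) h23
        · exact stepA_caseIII hS st (r := q3) (s := q4)
            (by rw [hR, eg, eh]; ext t; simp; try tauto) hg hh hgh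
            (by rw [eg]; exact h23) (by rw [eg]; exact h24)
            (by rw [eh]; exact h13) (by rw [eh]; exact h14) h34
        · exact absurd (eg.trans eh.symm) hgh
        · exact stepA_caseIII hS st (r := q1) (s := q4)
            (by rw [hR, eg, eh]; ext t; simp; try tauto) hg hh hgh
            (by rw [eg]; exact h12.symm) (by rw [eg]; exact h24)
            (by rw [eh]; exact h13.symm) (by rw [eh]; exact h34) h14
        · exact stepA_caseIII hS st (r := q1) (s := q3)
            (by rw [hR, eg, eh]; ext t; simp; try tauto) hg hh hgh
            (by rw [eg]; exact h12.symm) (by rw [eg]; exact h23)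
            (by rw [eh]; exact h14.symm) (by rw [eh]; exact h34.symm) h13
        · exact stepA_caseIII hS st (r := q2) (s := q4)
            (by rw [hR, eg, eh]; ext t; simp; try tauto) hg hh hgh
            (by rw [eg]; exact h23.symm) (by rw [eg]; exact h34)
            (by rw [eh]; exact h12) (by rw [eh]; exact h14) h24
        · exact stepA_caseIII hS st (r := q1) (s := q4)
            (by rw [hR, eg, eh]; ext t; simp; try tauto) hg hh hgh
            (by rw [eg]; exact h13.symm) (by rw [eg]; exact h34)
            (by rw [eh]; exact h12.symm) (by rw [eh]; exact h24) h14
        · exact absurd (eg.trans eh.symm) hgh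
        · exact stepA_caseIII hS st (r := q1) (s := q2)
            (by rw [hR, eg, eh]; ext t; simp; try tauto) hg hh hgh
            (by rw [eg]; exact h13.symm) (by rw [eg]; exact h23.symm)
            (by rw [eh]; exact h14.symm) (by rw [eh]; exact h24.symm) h12
        · exact stepA_caseIII hS st (r := q2) (s := q3)
            (by rw [hR, eg, eh]; ext t; simp; try tauto) hg hh hgh
            (by rw [eg]; exact h24.symm) (by rw [eg]; exact h34.symm)
            (by rw [eh]; exact h12) (by rw [eh]; exact h13) h23
        · exact stepA_caseIII hS st (r := q1) (s := q3)
            (by rw [hR, eg, eh]; ext t; simp; try tauto) hg hh hgh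
            (by rw [eg]; exact h14.symm) (by rw [eg]; exact h34.symm)
            (by rw [eh]; exact h12.symm) (by rw [eh]; exact h23) h13
        · exact stepA_caseIII hS st (r := q1) (s := q2)
            (by rw [hR, eg, eh]; ext t; simp; try tauto) hg hh hgh
            (by rw [eg]; exact h14.symm) (by rw [eg]; exact h24.symm)
            (by rw [eh]; exact h13.symm) (by rw [eh]; exact h23.symm) h12
        · exact absurd (eg.trans eh.symm) hgh
    · -- case II : g ∈ Q, h ∉ Q
      have hne : ∀ u : α, (u = q1 ∨ u = q2 ∨ u = q3 ∨ u = q4) → h ≠ u :=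
        fun u hu e => hhQ (by rw [e]; exact hu)
      rcases hgQ with e | e | e | e
      · exact stepA_selHead hS st (c1 := q2) (c2 := q3) (c3 := q4)
          (by rw [hR, e]) hg hh
          (by rw [e]; exact h12) (by rw [e]; exact h13) (by rw [e]; exact h14)
          h23 h24 h34
          (fun e2 => hhQ (by rw [e2, e]; tauto)) (hne q2 (by tauto)) (hne q3 (by tauto)) (hne q4 (by tauto))
      · exact stepA_selHead hS st (c1 := q1) (c2 := q3) (c3 := q4)
          (by rw [hR, e]; ext t; simp; try tauto) hg hh
          (by rw [e]; exact h12.symm) (by rw [e]; exact h23) (by rw [e]; exact h24)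
          h13 h14 h34
          (fun e2 => hhQ (by rw [e2, e]; tauto)) (hne q1 (by tauto)) (hne q3 (by tauto)) (hne q4 (by tauto))
      · exact stepA_selHead hS st (c1 := q1) (c2 := q2) (c3 := q4)
          (by rw [hR, e]; ext t; simp; try tauto) hg hh
          (by rw [e]; exact h13.symm) (by rw [e]; exact h23.symm) (by rw [e]; exact h34)
          h12 h14 h24
          (fun e2 => hhQ (by rw [e2, e]; tauto)) (hne q1 (by tauto)) (hne q2 (by tauto)) (hne q4 (by tauto))
      · exact stepA_selHead hS st (c1 := q1) (c2 := q2) (c3 := q3)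
          (by rw [hR, e]; ext t; simp; try tauto) hg hh
          (by rw [e]; exact h14.symm) (by rw [e]; exact h24.symm) (by rw [e]; exact h34.symm)
          h12 h13 h23
          (fun e2 => hhQ (by rw [e2, e]; tauto)) (hne q1 (by tauto)) (hne q2 (by tauto)) (hne q3 (by tauto))
  · -- case I : g ∉ Q
    have hne : ∀ u : α, (u = q1 ∨ u = q2 ∨ u = q3 ∨ u = q4) → g ≠ u :=
      fun u hu e => hgQ (by rw [e]; exact hu)
    exact stepA_selTail hS st hR hg hh h12 h13 h14 h23 h24 h34
      (hne q1 (by tauto)) (hne q2 (by tauto)) (hne q3 (by tauto)) (hne q4 (by tauto))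

end STSGood


namespace STSGood

variable {α : Type*} [DecidableEq α] {pts : Finset α} {bls : Finset (Finset α)}

lemma grow (hS : IsSTS pts bls) : ∀ n, 4 ≤ n → ∀ (p : List α) (a a' b b' : α),
    PathSt pts bls p a a' b b' → (pts \ p.toFinset).card = n →
    ∃ L, IsCyclicGoodSeq pts bls 3 L := by
  intro n
  induction n using Nat.strong_induction_on with
  | _ n IH =>
    intro h4 p a a' b b' st hcard
    rcases eq_or_lt_of_le h4 with he | hlt
    · -- n = 4 : finish via stepA
      obtain ⟨q1, hq1⟩ : ∃ q, q ∈ pts \ p.toFinset :=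
        Finset.card_pos.mp (by omega) |>.imp (fun _ h => h) |> fun h => h
      have h3 : ((pts \ p.toFinset).erase q1).card = 3 := by
        rw [Finset.card_erase_of_mem hq1]; omega
      obtain ⟨q2, q3, q4, h23, h24, h34, hE⟩ := Finset.card_eq_three.mp h3
      have hq1n := Finset.notMem_erase q1 (pts \ p.toFinset)
      have h12 : q1 ≠ q2 := fun e => hq1n (by rw [hE]; simp [e])
      have h13 : q1 ≠ q3 := fun e => hq1n (by rw [hE]; simp [e])
      have h14 : q1 ≠ q4 := fun e => hq1n (by rw [hE]; simp [e])
      have hR : pts \ p.toFinset = {q1, q2, q3, q4} := by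
        rw [← Finset.insert_erase hq1, hE]
      exact stepA hS st hR h12 h13 h14 h23 h24 h34
    · -- n ≥ 5 : extend the path at the tail
      have h2 : 1 < (pts \ p.toFinset).card := by omega
      obtain ⟨z1, hz1, z2, hz2, hzz⟩ := Finset.one_lt_card.mp h2
      have proceed : ∀ z, z ∈ pts \ p.toFinset → ¬ Bad bls b' b z →
          ∃ L, IsCyclicGoodSeq pts bls 3 L := by
        intro z hz hv
        have hzpts := (Finset.mem_sdiff.mp hz).1
        have hzp : z ∉ p := fun hc => (Finset.mem_sdiff.mp hz).2 (List.mem_toFinset.mpr hc)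
        have st' := st.concatExt hzpts hzp hv
        have hcard' : (pts \ (p ++ [z]).toFinset).card = n - 1 := by
          have h1 : (p ++ [z]).toFinset = insert z p.toFinset := by
            ext t; simp [or_comm]
          rw [h1, Finset.sdiff_insert, Finset.card_erase_of_mem hz, hcard]
        exact IH (n-1) (by omega) (by omega) _ a a' z b st' hcard'
      by_cases hc1 : Bad bls b' b z1
      · exact proceed z2 hz2 (fun hc => hzz (bad_unique hS hc1 hc))
      · exact proceed z1 hz1 hc1

/-- the basic two-point path -/
lemma pairPath {x y : α} (hx : x ∈ pts) (hy : y ∈ pts) (hxy : x ≠ y) :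
    PathSt pts bls [x, y] x y y x := by
  refine ⟨by simp [hxy], ?_, by simp, goodL_short (by simp), by simp, by simp, by simp, by simp⟩
  intro t ht
  rcases List.mem_cons.mp ht with rfl | ht
  · exact hx
  · simp only [List.mem_singleton] at ht; subst ht; exact hy

lemma no_sts_four (hS : IsSTS pts bls) (h4 : pts.card = 4) : False := by
  obtain ⟨a, ha⟩ : ∃ q, q ∈ pts := Finset.card_pos.mp (by omega)
  have h3 : (pts.erase a).card = 3 := by rw [Finset.card_erase_of_mem ha]; omega
  obtain ⟨b, c, d, hbc, hbd, hcd, hE⟩ := Finset.card_eq_three.mp h3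
  have hbe : b ∈ pts.erase a := by rw [hE]; simp
  have hce : c ∈ pts.erase a := by rw [hE]; simp
  have hde : d ∈ pts.erase a := by rw [hE]; simp
  have hb : b ∈ pts := Finset.mem_of_mem_erase hbe
  have hc : c ∈ pts := Finset.mem_of_mem_erase hce
  have hd : d ∈ pts := Finset.mem_of_mem_erase hde
  have hab : a ≠ b := (Finset.ne_of_mem_erase hbe).symm
  have hac : a ≠ c := (Finset.ne_of_mem_erase hce).symm
  have had : a ≠ d := (Finset.ne_of_mem_erase hde).symm
  have hpts : pts = insert a ({b, c, d} : Finset α) := by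
    rw [← Finset.insert_erase ha, hE]
  obtain ⟨t, hT⟩ := exists_bad hS ha hb hab
  have htmem : t ∈ pts := bad_mem3 hS hT
  have hta : t ≠ a := (bad_ne13 hS hT).symm
  have htb : t ≠ b := (bad_ne23 hS hT).symm
  have htcd : t = c ∨ t = d := by
    rw [hpts] at htmem
    simp only [Finset.mem_insert, Finset.mem_singleton] at htmem
    rcases htmem with e | e | e | e
    · exact absurd e hta
    · exact absurd e htb
    · exact Or.inl e
    · exact Or.inr e
  rcases htcd with rfl | rfl
  · -- Bad a b t, t = c
    obtain ⟨s, hs⟩ := exists_bad hS ha hd had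
    have hsmem : s ∈ pts := bad_mem3 hS hs
    have hsa : s ≠ a := (bad_ne13 hS hs).symm
    have hsd : s ≠ d := (bad_ne23 hS hs).symm
    rw [hpts] at hsmem
    simp only [Finset.mem_insert, Finset.mem_singleton] at hsmem
    rcases hsmem with e | e | e | e
    · exact hsa e
    · exact hcd (bad_unique hS hT (bad_swap2 (e ▸ hs)))
    · exact hbd (bad_unique hS (bad_swap2 hT) (bad_swap2 (e ▸ hs)))
    · exact hsd e
  · -- Bad a b t, t = d
    obtain ⟨s, hs⟩ := exists_bad hS ha hc hac
    have hsmem : s ∈ pts := bad_mem3 hS hs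
    have hsa : s ≠ a := (bad_ne13 hS hs).symm
    have hsc : s ≠ c := (bad_ne23 hS hs).symm
    rw [hpts] at hsmem
    simp only [Finset.mem_insert, Finset.mem_singleton] at hsmem
    rcases hsmem with e | e | e | e
    · exact hsa e
    · exact hcd (bad_unique hS (bad_swap2 (e ▸ hs)) hT)
    · exact hsc e
    · exact hbc (bad_unique hS (bad_swap2 hT) (bad_swap2 (e ▸ hs)))

/-- build the cycle when exactly three points remain outside a 2-path -/
lemma pair_finish (hS : IsSTS pts bls) {x y : α} (hx : x ∈ pts) (hy : y ∈ pts)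
    (hxy : x ≠ y) (hcard : (pts \ ({x, y} : Finset α)).card = 3)
    (hnb : pts \ ({x, y} : Finset α) ∉ bls) :
    ∃ L, IsCyclicGoodSeq pts bls 3 L := by
  have st := pairPath (bls := bls) hx hy hxy
  have htf : ([x, y] : List α).toFinset = ({x, y} : Finset α) := by simp
  obtain ⟨z1, z2, z3, h12, h13, h23, hE⟩ := Finset.card_eq_three.mp hcard
  have hR : pts \ ([x, y] : List α).toFinset = {z1, z2, z3} := by rw [htf, hE]
  obtain ⟨g, hg⟩ := exists_bad hS hx hy hxy
  refine stepB hS st hR h12 h13 h23 hg hg ?_ ?_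
  · intro hcont
    exact hnb (by rw [hE]; exact hcont)
  · exact fun k _ _ _ hgh _ _ => absurd rfl hgh

theorem main (hS : IsSTS pts bls) (hv : 3 < pts.card) :
    ∃ L, IsCyclicGoodSeq pts bls 3 L := by
  rcases Nat.lt_or_ge pts.card 5 with h45 | h5
  · -- card = 4 : impossible
    exact absurd (by omega : pts.card = 4) (fun h4 => (no_sts_four hS h4).elim)
  · rcases Nat.lt_or_ge pts.card 6 with h55 | h6
    · -- card = 5
      have h5' : pts.card = 5 := by omega
      obtain ⟨a, ha, b, hb, hab⟩ := Finset.one_lt_card.mp (by omega : 1 < pts.card)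
      have hbig : 2 < pts.card := by omega
      obtain ⟨c, hc, hca, hcb⟩ : ∃ c ∈ pts, c ≠ a ∧ c ≠ b := by
        have : (pts \ {a, b}).Nonempty := by
          rw [← Finset.card_pos, Finset.card_sdiff_of_subset (by
            intro t ht
            simp only [Finset.mem_insert, Finset.mem_singleton] at ht
            rcases ht with rfl | rfl <;> assumption)]
          have : ({a, b} : Finset α).card ≤ 2 := Finset.card_insert_le _ _ |>.trans (by simp)
          omega
        obtain ⟨c, hc⟩ := this
        rw [Finset.mem_sdiff] at hc
        exact ⟨c, hc.1, fun e => hc.2 (by simp [e]), fun e => hc.2 (by simp [e])⟩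
      have hcardsub : ∀ u w : α, u ∈ pts → w ∈ pts → u ≠ w →
          (pts \ ({u, w} : Finset α)).card = 3 := by
        intro u w hu hw huw
        rw [Finset.card_sdiff_of_subset (by
          intro t ht
          simp only [Finset.mem_insert, Finset.mem_singleton] at ht
          rcases ht with rfl | rfl <;> assumption)]
        rw [h5']
        rw [Finset.card_insert_of_notMem (by simp [huw]), Finset.card_singleton]
      by_cases hD : pts \ ({a, b} : Finset α) ∈ bls
      · by_cases hD2 : pts \ ({a, c} : Finset α) ∈ bls
        · -- impossible: the two blocks share two points
          exfalso
          have hsub : pts \ ({a, b, c} : Finset α) ⊆ pts \ ({a, b} : Finset α) := by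
            intro t ht; rw [Finset.mem_sdiff] at *
            refine ⟨ht.1, fun hc2 => ht.2 ?_⟩
            simp only [Finset.mem_insert, Finset.mem_singleton] at hc2 ⊢; tauto
          have hsub2 : pts \ ({a, b, c} : Finset α) ⊆ pts \ ({a, c} : Finset α) := by
            intro t ht; rw [Finset.mem_sdiff] at *
            refine ⟨ht.1, fun hc2 => ht.2 ?_⟩
            simp only [Finset.mem_insert, Finset.mem_singleton] at hc2 ⊢; tauto
          have hcard3 : ({a, b, c} : Finset α).card = 3 := by
            rw [Finset.card_insert_of_notMem (by simp [hab, Ne.symm hca]),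
              Finset.card_insert_of_notMem (by simp [Ne.symm hcb]), Finset.card_singleton]
          have hc2 : 1 < (pts \ ({a, b, c} : Finset α)).card := by
            rw [Finset.card_sdiff_of_subset (by
              intro t ht
              simp only [Finset.mem_insert, Finset.mem_singleton] at ht
              rcases ht with rfl | rfl | rfl <;> assumption)]
            omega
          obtain ⟨u, hu, w, hw, huw⟩ := Finset.one_lt_card.mp hc2
          have hu1 := hsub hu; have hu2 := hsub2 hu
          have hw1 := hsub hw; have hw2 := hsub2 hw
          have hupts : u ∈ pts := (Finset.mem_sdiff.mp hu1).1
          have hwpts : w ∈ pts := (Finset.mem_sdiff.mp hw1).1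
          obtain ⟨bk, -, huniq⟩ := hS.2 u hupts w hwpts huw
          have e1 := huniq _ ⟨hD, hu1, hw1⟩
          have e2 := huniq _ ⟨hD2, hu2, hw2⟩
          have hcS1 : c ∈ pts \ ({a, b} : Finset α) :=
            Finset.mem_sdiff.mpr ⟨hc, by simp [hca, hcb]⟩
          have hcS2 : c ∉ pts \ ({a, c} : Finset α) :=
            fun hcc => (Finset.mem_sdiff.mp hcc).2 (by simp)
          rw [e1, ← e2] at hcS1
          exact hcS2 hcS1
        · exact pair_finish hS ha hc hca.symm (hcardsub a c ha hc hca.symm) hD2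
      · exact pair_finish hS ha hb hab (hcardsub a b ha hb hab) hD
    · -- card ≥ 6
      obtain ⟨a, ha, b, hb, hab⟩ := Finset.one_lt_card.mp (by omega : 1 < pts.card)
      have st := pairPath (bls := bls) ha hb hab
      have hcard : (pts \ ([a, b] : List α).toFinset).card = pts.card - 2 := by
        have htf : ([a, b] : List α).toFinset = ({a, b} : Finset α) := by simp
        rw [htf, Finset.card_sdiff_of_subset (by
          intro t ht
          simp only [Finset.mem_insert, Finset.mem_singleton] at ht
          rcases ht with rfl | rfl <;> assumption)]
        rw [Finset.card_insert_of_notMem (by simp [hab]), Finset.card_singleton]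
      exact grow hS (pts.card - 2) (by omega) _ a b b a st hcard

end STSGood

theorem stmt4 {α : Type*} [DecidableEq α] (points : Finset α) (blocks : Finset (Finset α))
    (hS : IsSTS points blocks) (hv : 3 < points.card) :
    ∃ L : List α, IsCyclicGoodSeq points blocks 3 L := by
  exact STSGood.main hS hv
end

section
/- Let v ≥ 19 and let S be a Steiner triple system of order v which has an independent set of cardinality 8. Then S admits a 4-good sequencing. -/
section Aux
variable {α : Type*} [DecidableEq α] (points : Finset α) (blocks : Finset (Finset α))

open Classical in
/-- third point of a pair -/
noncomputable def trd (x y : α) : α :=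
  if h : ∃ z, z ≠ x ∧ z ≠ y ∧ ({x, y, z} : Finset α) ∈ blocks then h.choose else x

variable {points blocks}

lemma block_shape (hS : IsSTS points blocks) {b : Finset α} {x y : α}
    (hb : b ∈ blocks) (hx : x ∈ b) (hy : y ∈ b) (hxy : x ≠ y) :
    ∃ z, z ≠ x ∧ z ≠ y ∧ b = {x, y, z} := by
  have hcard := (hS.1 b hb).2
  have h2 : ({x, y} : Finset α) ⊆ b := by
    intro w hw
    rcases Finset.mem_insert.mp hw with rfl | hw
    · exact hx
    · rwa [Finset.mem_singleton.mp hw]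
  have hc2 : ({x, y} : Finset α).card = 2 := Finset.card_pair hxy
  have h1 : (b \ {x, y}).card = 1 := by
    rw [Finset.card_sdiff_of_subset h2, hcard, hc2]
  obtain ⟨z, hz⟩ := Finset.card_eq_one.mp h1
  have hzmem : z ∈ b \ ({x, y} : Finset α) := by rw [hz]; exact Finset.mem_singleton_self z
  have hz1 := Finset.mem_sdiff.mp hzmem
  refine ⟨z, ?_, ?_, ?_⟩
  · intro h; exact hz1.2 (by simp [h])
  · intro h; exact hz1.2 (by simp [h])
  · have : b = {x, y} ∪ (b \ {x, y}) := by
      rw [Finset.union_sdiff_of_subset h2]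
    rw [this, hz]
    ext w; simp [or_assoc]

lemma trd_spec (hS : IsSTS points blocks) {x y : α} (hx : x ∈ points) (hy : y ∈ points)
    (hxy : x ≠ y) :
    trd blocks x y ≠ x ∧ trd blocks x y ≠ y ∧ ({x, y, trd blocks x y} : Finset α) ∈ blocks := by
  obtain ⟨b, ⟨hb, hxb, hyb⟩, _⟩ := hS.2 x hx y hy hxy
  obtain ⟨z, hz1, hz2, hz3⟩ := block_shape hS hb hxb hyb hxy
  have hex : ∃ z, z ≠ x ∧ z ≠ y ∧ ({x, y, z} : Finset α) ∈ blocks := ⟨z, hz1, hz2, hz3 ▸ hb⟩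
  unfold trd
  rw [dif_pos hex]
  exact hex.choose_spec

lemma card3_ne {x y z : α} (h : ({x, y, z} : Finset α).card = 3) : x ≠ y := by
  rintro rfl
  have : ({x, x, z} : Finset α) = {x, z} := by simp
  rw [this] at h
  have := Finset.card_insert_le x ({z} : Finset α)
  simp at this
  omega

lemma trd_eq (hS : IsSTS points blocks) {x y z : α}
    (h : ({x, y, z} : Finset α) ∈ blocks) (hzx : z ≠ x) (hzy : z ≠ y) :
    trd blocks x y = z := by
  have hcard := (hS.1 _ h).2
  have hxy : x ≠ y := card3_ne hcard
  have hsub := (hS.1 _ h).1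
  have hx : x ∈ points := hsub (by simp)
  have hy : y ∈ points := hsub (by simp)
  obtain ⟨ht1, ht2, ht3⟩ := trd_spec hS hx hy hxy
  obtain ⟨b, -, hub⟩ := hS.2 x hx y hy hxy
  have e1 : ({x, y, trd blocks x y} : Finset α) = b := hub _ ⟨ht3, by simp, by simp⟩
  have e2 : ({x, y, z} : Finset α) = b := hub _ ⟨h, by simp, by simp⟩
  have : z ∈ ({x, y, trd blocks x y} : Finset α) := by
    rw [e1, ← e2]; simp
  rcases Finset.mem_insert.mp this with rfl | h'
  · exact absurd rfl hzx
  · rcases Finset.mem_insert.mp h' with rfl | h''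
    · exact absurd rfl hzy
    · exact (Finset.mem_singleton.mp h'').symm

lemma trd_invol (hS : IsSTS points blocks) {x y : α} (hx : x ∈ points) (hy : y ∈ points)
    (hxy : x ≠ y) : trd blocks x (trd blocks x y) = y := by
  obtain ⟨ht1, ht2, ht3⟩ := trd_spec hS hx hy hxy
  have : ({x, trd blocks x y, y} : Finset α) ∈ blocks := by
    have e : ({x, trd blocks x y, y} : Finset α) = {x, y, trd blocks x y} := by
      ext w; simp; tauto
    rwa [e]
  exact trd_eq hS this (Ne.symm hxy) (Ne.symm ht2)

lemma trd_comm (hS : IsSTS points blocks) {x y : α} (hx : x ∈ points) (hy : y ∈ points)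
    (hxy : x ≠ y) : trd blocks x y = trd blocks y x := by
  obtain ⟨ht1, ht2, ht3⟩ := trd_spec hS hx hy hxy
  have : ({y, x, trd blocks x y} : Finset α) ∈ blocks := by
    rwa [Finset.insert_comm] at ht3
  exact (trd_eq hS this ht2 ht1).symm

/-- if t1, t2 ∈ I independent, the third point is outside I -/
lemma trd_not_mem_indep (hS : IsSTS points blocks) {I : Finset α} (hIsub : I ⊆ points)
    (hI : IsIndep blocks I) {x y : α} (hx : x ∈ I) (hy : y ∈ I) (hxy : x ≠ y) :
    trd blocks x y ∉ I := by
  obtain ⟨ht1, ht2, ht3⟩ := trd_spec hS (hIsub hx) (hIsub hy) hxy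
  intro hmem
  exact hI _ ht3 (by
    intro w hw
    rcases Finset.mem_insert.mp hw with rfl | hw
    · exact hx
    · rcases Finset.mem_insert.mp hw with rfl | hw
      · exact hy
      · rwa [Finset.mem_singleton.mp hw])

end Aux

section Windows
variable {α : Type*} [DecidableEq α] {points : Finset α} {blocks : Finset (Finset α)}

/-- no 4-window of L contains a block -/
def Ok (blocks : Finset (Finset α)) (L : List α) : Prop :=
  ∀ i : ℕ, ∀ b ∈ blocks, ¬ b ⊆ ((L.drop i).take 4).toFinset

lemma ok_nil (hS : IsSTS points blocks) : Ok blocks ([] : List α) := by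
  intro i b hb hsub
  have := (hS.1 b hb).2
  simp only [List.drop_nil, List.take_nil, List.toFinset_nil, Finset.subset_empty] at hsub
  rw [hsub] at this; simp at this

lemma last3_no (hOk : Ok blocks L) :
    ∀ b ∈ blocks, ¬ b ⊆ (L.drop (L.length - 3)).toFinset := by
  intro b hb
  have h := hOk (L.length - 3) b hb
  rwa [List.take_of_length_le (by simp [List.length_drop]; omega)] at h

lemma drop_tail_subset (L : List α) (x : α) (i : ℕ) (h : L.length ≤ i + 3) :
    ∀ y ∈ (L ++ [x]).drop i, y ∈ insert x (L.drop (L.length - 3)).toFinset := by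
  intro y hy
  set m := L.length - 3 with hm
  have hmi : m ≤ i := by omega
  have h1 : (L ++ [x]).drop i = ((L ++ [x]).drop m).drop (i - m) := by
    rw [List.drop_drop]
    congr 1
    omega
  rw [h1] at hy
  have hy2 : y ∈ (L ++ [x]).drop m := List.drop_subset _ _ hy
  rw [List.drop_append_of_le_length (by omega)] at hy2
  rcases List.mem_append.mp hy2 with h2 | h2
  · exact Finset.mem_insert_of_mem (List.mem_toFinset.mpr h2)
  · simp at h2; simp [h2]

lemma ok_append (hOk : Ok blocks L)
    (hx : ∀ b ∈ blocks, ¬ b ⊆ insert x (L.drop (L.length - 3)).toFinset) :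
    Ok blocks (L ++ [x]) := by
  intro i b hb
  by_cases h : i + 4 ≤ L.length
  · rw [List.drop_append_of_le_length (by omega),
      List.take_append_of_le_length (by simp [List.length_drop]; omega)]
    exact hOk i b hb
  · intro hsub
    refine hx b hb (hsub.trans ?_)
    intro y hy
    have := List.take_subset 4 _ (List.mem_toFinset.mp hy)
    exact drop_tail_subset L x i (by omega) y this

lemma last3_append_subset (L : List α) (x : α) :
    ((L ++ [x]).drop ((L ++ [x]).length - 3)).toFinset ⊆
      insert x (L.drop (L.length - 3)).toFinset := by
  intro y hy
  refine drop_tail_subset L x _ (by simp; omega) y (List.mem_toFinset.mp hy)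

lemma last3_append (L : List α) {p q r : α} (h : L.drop (L.length - 3) = [p, q, r]) (x : α) :
    (L ++ [x]).drop ((L ++ [x]).length - 3) = [q, r, x] := by
  have hlen : (L.drop (L.length - 3)).length = 3 := by rw [h]; rfl
  rw [List.length_drop] at hlen
  have h3 : 3 ≤ L.length := by omega
  have e1 : (L ++ [x]).length - 3 = L.length - 2 := by simp only [List.length_append, List.length_singleton]; omega
  rw [e1, List.drop_append_of_le_length (by omega)]
  have e2 : L.drop (L.length - 2) = (L.drop (L.length - 3)).drop 1 := by
    rw [List.drop_drop]
    congr 1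
    omega
  rw [e2, h]
  rfl

lemma ok_append_indep (hI : IsIndep blocks I) :
    ∀ (M L : List α), Ok blocks L → (∀ y ∈ L.drop (L.length - 3), y ∈ I) →
      (∀ x ∈ M, x ∈ I) → Ok blocks (L ++ M) := by
  intro M
  induction M with
  | nil => intro L hOk _ _; simpa using hOk
  | cons x M ih =>
    intro L hOk hlast hM
    have e : L ++ x :: M = (L ++ [x]) ++ M := by simp
    rw [e]
    refine ih (L ++ [x]) ?_ ?_ (fun y hy => hM y (List.mem_cons_of_mem _ hy))
    · refine ok_append hOk ?_
      intro b hb hsub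
      refine hI b hb (hsub.trans ?_)
      intro y hy
      rcases Finset.mem_insert.mp hy with rfl | hy
      · exact hM y List.mem_cons_self
      · exact hlast y (List.mem_toFinset.mp hy)
    · intro y hy
      have := last3_append_subset L x (List.mem_toFinset.mpr hy)
      rcases Finset.mem_insert.mp this with rfl | h2
      · exact hM y List.mem_cons_self
      · exact hlast y (List.mem_toFinset.mp h2)

end Windows

section Ext
variable {α : Type*} [DecidableEq α] {points : Finset α} {blocks : Finset (Finset α)}

lemma ext_thirds (hS : IsSTS points blocks) {T : Finset α} (hTpts : T ⊆ points)
    (hTno : ∀ b ∈ blocks, ¬ b ⊆ T) {a b c x : α} (hTsub : T ⊆ ({a, b, c} : Finset α))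
    (h1 : x ≠ trd blocks a b) (h2 : x ≠ trd blocks a c) (h3 : x ≠ trd blocks b c) :
    ∀ bl ∈ blocks, ¬ bl ⊆ insert x T := by
  intro bl hbl hsub
  by_cases hxT : x ∈ T
  · rw [Finset.insert_eq_self.mpr hxT] at hsub
    exact hTno bl hbl hsub
  by_cases hxbl : x ∈ bl
  · have hsub2 : bl.erase x ⊆ T := by
      intro y hy
      obtain ⟨hyx, hybl⟩ := Finset.mem_erase.mp hy
      exact (Finset.mem_insert.mp (hsub hybl)).resolve_left hyx
    have hcard : (bl.erase x).card = 2 := by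
      rw [Finset.card_erase_of_mem hxbl, (hS.1 bl hbl).2]
    obtain ⟨y, z, hyz, hbe⟩ := Finset.card_eq_two.mp hcard
    have hyT : y ∈ T := hsub2 (by rw [hbe]; simp)
    have hzT : z ∈ T := hsub2 (by rw [hbe]; simp)
    have hxy : x ≠ y := by rintro rfl; exact hxT hyT
    have hxz : x ≠ z := by rintro rfl; exact hxT hzT
    have hbl_eq : bl = ({y, z, x} : Finset α) := by
      have e1 : bl = insert x (bl.erase x) := (Finset.insert_erase hxbl).symm
      rw [e1, hbe]
      ext w; simp; tauto
    have htrd : trd blocks y z = x := trd_eq hS (hbl_eq ▸ hbl) hxy hxz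
    have hy3 := hTsub hyT
    have hz3 := hTsub hzT
    have hyp : y ∈ points := hTpts hyT
    have hzp : z ∈ points := hTpts hzT
    simp only [Finset.mem_insert, Finset.mem_singleton] at hy3 hz3
    rcases hy3 with rfl | rfl | rfl <;> rcases hz3 with rfl | rfl | rfl
    · exact hyz rfl
    · exact h1 htrd.symm
    · exact h2 htrd.symm
    · exact h1 (by rw [← htrd]; exact trd_comm hS hyp hzp hyz)
    · exact hyz rfl
    · exact h3 htrd.symm
    · exact h2 (by rw [← htrd]; exact trd_comm hS hyp hzp hyz)
    · exact h3 (by rw [← htrd]; exact trd_comm hS hyp hzp hyz)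
    · exact hyz rfl
  · refine hTno bl hbl ?_
    intro w hw
    exact (Finset.mem_insert.mp (hsub hw)).resolve_left (by rintro rfl; exact hxbl hw)

lemma cover3 (l : List α) (h : l.length ≤ 3) (d : α) :
    ∃ a b c, ∀ y ∈ l, y ∈ ({a, b, c} : Finset α) := by
  match l with
  | [] => exact ⟨d, d, d, by simp⟩
  | [a] => exact ⟨a, a, a, by intro y hy; simp at hy; simp [hy]⟩
  | [a, b] => exact ⟨a, b, b, by intro y hy; simp at hy; rcases hy with rfl | rfl <;> simp⟩
  | [a, b, c] =>
    exact ⟨a, b, c, by intro y hy; simp at hy; rcases hy with rfl | rfl | rfl <;> simp⟩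
  | a :: b :: c :: e :: l' => simp at h; omega

lemma exists_avoid {S F : Finset α} (h : F.card < S.card) : ∃ x ∈ S, x ∉ F := by
  have : 0 < (S \ F).card := by
    have := Finset.le_card_sdiff F S
    omega
  obtain ⟨x, hx⟩ := Finset.card_pos.mp this
  obtain ⟨h1, h2⟩ := Finset.mem_sdiff.mp hx
  exact ⟨x, h1, h2⟩

lemma card2_le (a b : α) : ({a, b} : Finset α).card ≤ 2 :=
  le_trans (Finset.card_insert_le _ _) (by simp)

lemma card3_le (a b c : α) : ({a, b, c} : Finset α).card ≤ 3 := by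
  refine le_trans (Finset.card_insert_le _ _) (Nat.add_le_add_right ?_ 1)
  refine le_trans (Finset.card_insert_le _ _) (Nat.add_le_add_right ?_ 1)
  simp

lemma card5_le (a b c d e : α) : ({a, b, c, d, e} : Finset α).card ≤ 5 := by
  refine le_trans (Finset.card_insert_le _ _) (Nat.add_le_add_right ?_ 1)
  refine le_trans (Finset.card_insert_le _ _) (Nat.add_le_add_right ?_ 1)
  exact card3_le c d e

lemma card6_le (a b c d e f : α) : ({a, b, c, d, e, f} : Finset α).card ≤ 6 :=
  le_trans (Finset.card_insert_le _ _) (Nat.add_le_add_right (card5_le b c d e f) 1)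

/-- generic greedy chooser: any pool of size > 3 + |F| has a point extending L -/
lemma exists_pick (hS : IsSTS points blocks) {L : List α} (hOk : Ok blocks L)
    (hLp : ∀ y ∈ L, y ∈ points) {P F : Finset α} (hP : P ⊆ points)
    (hcard : 3 + F.card < P.card) :
    ∃ x ∈ P, x ∉ F ∧ ∀ b ∈ blocks, ¬ b ⊆ insert x (L.drop (L.length - 3)).toFinset := by
  obtain ⟨x0, hx0⟩ := Finset.card_pos.mp (by omega : 0 < P.card)
  obtain ⟨a, b, c, habc⟩ := cover3 (L.drop (L.length - 3)) (by simp; omega) x0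
  set S : Finset α := {trd blocks a b, trd blocks a c, trd blocks b c} ∪ F with hs
  have hScard : S.card ≤ 3 + F.card :=
    le_trans (Finset.card_union_le _ _) (Nat.add_le_add_right (card3_le _ _ _) _)
  obtain ⟨x, hxP, hxS⟩ := exists_avoid (by omega : S.card < P.card)
  simp only [hs, Finset.mem_union, Finset.mem_insert, Finset.mem_singleton, not_or] at hxS
  obtain ⟨⟨h1, h2, h3⟩, hF⟩ := hxS
  refine ⟨x, hxP, hF, ?_⟩
  refine ext_thirds hS ?_ (last3_no hOk) ?_ h1 h2 h3
  · intro y hy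
    exact hLp y (List.drop_subset _ _ (List.mem_toFinset.mp hy))
  · intro y hy
    exact habc y (List.mem_toFinset.mp hy)

end Ext

section Phase1
variable {α : Type*} [DecidableEq α] {points : Finset α} {blocks : Finset (Finset α)}

lemma grow (hS : IsSTS points blocks) (I : Finset α) :
    ∀ (n : ℕ) (L : List α), L.Nodup → Ok blocks L → (∀ y ∈ L, y ∈ points \ I) →
      ((points \ I) \ L.toFinset).card = n + 3 →
      ∃ (L' : List α) (U : Finset α), L'.Nodup ∧ Ok blocks L' ∧
        (∀ y ∈ L', y ∈ points \ I) ∧ U ⊆ points \ I ∧ U.card = 3 ∧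
        L'.toFinset = (points \ I) \ U := by
  intro n
  induction n with
  | zero =>
    intro L h1 h2 h3 h4
    refine ⟨L, (points \ I) \ L.toFinset, h1, h2, h3, Finset.sdiff_subset, h4, ?_⟩
    rw [Finset.sdiff_sdiff_eq_self]
    intro y hy
    exact h3 y (List.mem_toFinset.mp hy)
  | succ n ih =>
    intro L h1 h2 h3 h4
    obtain ⟨x, hxP, -, hxext⟩ := exists_pick hS h2
      (fun y hy => Finset.mem_sdiff.mp (h3 y hy) |>.1)
      (P := (points \ I) \ L.toFinset) (F := ∅)
      (Finset.sdiff_subset.trans Finset.sdiff_subset)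
      (by rw [h4]; simp)
    have hxL : x ∉ L := fun h => (Finset.mem_sdiff.mp hxP).2 (List.mem_toFinset.mpr h)
    refine ih (L ++ [x]) ?_ (ok_append h2 hxext) ?_ ?_
    · simp [List.nodup_append, h1, hxL]; rintro a ha rfl; exact hxL ha
    · intro y hy
      rcases List.mem_append.mp hy with h | h
      · exact h3 y h
      · simp at h; rw [h]; exact (Finset.mem_sdiff.mp hxP).1
    · have e : (L ++ [x]).toFinset = insert x L.toFinset := by ext w; simp [or_comm]
      rw [e]
      have e2 : (points \ I) \ insert x L.toFinset = ((points \ I) \ L.toFinset).erase x := by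
        ext w; simp [and_comm, and_assoc]; tauto
      rw [e2, Finset.card_erase_of_mem hxP, h4]
      omega

lemma phase1 (hS : IsSTS points blocks) {I : Finset α} (hIsub : I ⊆ points)
    (hIcard : I.card = 8) (hv : 19 ≤ points.card) :
    ∃ (L : List α) (U : Finset α), L.Nodup ∧ Ok blocks L ∧
      (∀ y ∈ L, y ∈ points \ I) ∧ U ⊆ points \ I ∧ U.card = 3 ∧
      L.toFinset = (points \ I) \ U ∧ 3 ≤ L.length := by
  have hcard : (points \ I).card = points.card - 8 := by
    rw [Finset.card_sdiff_of_subset hIsub, hIcard]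
  obtain ⟨L, U, h1, h2, h3, h4, h5, h6⟩ := grow hS I (points.card - 11) [] (by simp)
    (ok_nil hS) (by simp) (by simp [hcard]; omega)
  refine ⟨L, U, h1, h2, h3, h4, h5, h6, ?_⟩
  have : L.toFinset.card = L.length := List.toFinset_card_of_nodup h1
  rw [h6, Finset.card_sdiff_of_subset h4, hcard, h5] at this
  omega

end Phase1

section Helpers
variable {α : Type*} [DecidableEq α] {points : Finset α} {blocks : Finset (Finset α)}

lemma list_len3 {l : List α} (h : l.length = 3) : ∃ a b c, l = [a, b, c] := by
  match l, h with
  | [a, b, c], _ => exact ⟨a, b, c, rfl⟩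

lemma ext_of_last3 (hS : IsSTS points blocks) {L : List α} (hOk : Ok blocks L) {a b c x : α}
    (hd : L.drop (L.length - 3) = [a, b, c]) (ha : a ∈ points) (hb : b ∈ points)
    (hc : c ∈ points) (h1 : x ≠ trd blocks a b) (h2 : x ≠ trd blocks a c)
    (h3 : x ≠ trd blocks b c) :
    ∀ bl ∈ blocks, ¬ bl ⊆ insert x (L.drop (L.length - 3)).toFinset := by
  refine ext_thirds hS ?_ (last3_no hOk) ?_ h1 h2 h3
  · rw [hd]
    intro y hy
    simp at hy
    rcases hy with rfl | rfl | rfl <;> assumption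
  · rw [hd]
    intro y hy
    simp at hy
    rcases hy with rfl | rfl | rfl <;> simp

lemma nodup_concat {L : List α} {x : α} (hN : L.Nodup) (hx : x ∉ L.toFinset) :
    (L ++ [x]).Nodup := by
  simp [List.nodup_append, hN]
  rintro a ha rfl
  exact hx (List.mem_toFinset.mpr ha)

end Helpers

theorem stmt5 {α : Type*} [DecidableEq α] (points : Finset α) (blocks : Finset (Finset α))
    (hS : IsSTS points blocks) (hv : 19 ≤ points.card)
    (I : Finset α) (hIsub : I ⊆ points) (hIcard : I.card = 8) (hI : IsIndep blocks I) :
    ∃ L : List α, IsGoodSeq points blocks 4 L := by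
  classical
  obtain ⟨L0, U, hN0, hOk0, hmem0, hUsub, hUcard, hTF0, hlen0⟩ := phase1 hS hIsub hIcard hv
  -- the last three points of L0
  have hd0len : (L0.drop (L0.length - 3)).length = 3 := by simp; omega
  obtain ⟨p, q, r, hd0⟩ := list_len3 hd0len
  have hpqr_mem : ∀ z ∈ ([p, q, r] : List α), z ∈ points \ I := by
    intro z hz
    have : z ∈ L0.drop (L0.length - 3) := by rw [hd0]; exact hz
    exact hmem0 z (List.drop_subset _ _ this)
  have hpP : p ∈ points := (Finset.mem_sdiff.mp (hpqr_mem p (by simp))).1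
  have hpI : p ∉ I := (Finset.mem_sdiff.mp (hpqr_mem p (by simp))).2
  have hqP : q ∈ points := (Finset.mem_sdiff.mp (hpqr_mem q (by simp))).1
  have hqI : q ∉ I := (Finset.mem_sdiff.mp (hpqr_mem q (by simp))).2
  have hrP : r ∈ points := (Finset.mem_sdiff.mp (hpqr_mem r (by simp))).1
  have hrI : r ∉ I := (Finset.mem_sdiff.mp (hpqr_mem r (by simp))).2
  -- U facts
  have hUpts : ∀ u ∈ U, u ∈ points := fun u hu => (Finset.mem_sdiff.mp (hUsub hu)).1
  have hUI : ∀ u ∈ U, u ∉ I := fun u hu => (Finset.mem_sdiff.mp (hUsub hu)).2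
  -- membership helpers for L0
  have hnotL0_I : ∀ x ∈ I, x ∉ L0.toFinset := by
    intro x hx hmem
    rw [hTF0] at hmem
    exact (Finset.mem_sdiff.mp (Finset.mem_sdiff.mp hmem).1).2 hx
  have hnotL0_U : ∀ x ∈ U, x ∉ L0.toFinset := by
    intro x hx hmem
    rw [hTF0] at hmem
    exact (Finset.mem_sdiff.mp hmem).2 hx
  -- choose ua ∈ U with ua ≠ trd q r
  obtain ⟨ua, huaU, huane0⟩ := exists_avoid
    (show ({trd blocks q r} : Finset α).card < U.card by simp [hUcard])
  have hua1 : ua ≠ trd blocks q r := by simpa using huane0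
  have huaP : ua ∈ points := hUpts ua huaU
  have huaI : ua ∉ I := hUI ua huaU
  -- choose y1
  obtain ⟨y1, hy1I, hy1F⟩ := exists_avoid
    (show ({trd blocks p q, trd blocks p r, trd blocks q r, trd blocks q ua,
        trd blocks r ua} : Finset α).card < I.card from
      lt_of_le_of_lt (card5_le _ _ _ _ _) (by rw [hIcard]; norm_num))
  simp only [Finset.mem_insert, Finset.mem_singleton, not_or] at hy1F
  obtain ⟨hy1a, hy1b, hy1c, hy1d, hy1e⟩ := hy1F
  have hy1P : y1 ∈ points := hIsub hy1I
  have hqy1 : q ≠ y1 := by rintro rfl; exact hqI hy1I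
  have hry1 : r ≠ y1 := by rintro rfl; exact hrI hy1I
  -- L1 = L0 ++ [y1]
  set L1 := L0 ++ [y1] with hL1def
  have hOk1 : Ok blocks L1 :=
    ok_append hOk0 (ext_of_last3 hS hOk0 hd0 hpP hqP hrP hy1a hy1b hy1c)
  have hd1 : L1.drop (L1.length - 3) = [q, r, y1] := last3_append L0 hd0 y1
  have hN1 : L1.Nodup := nodup_concat hN0 (hnotL0_I y1 hy1I)
  have hTF1 : L1.toFinset = insert y1 L0.toFinset := by
    rw [hL1def]; ext z; simp [or_comm]
  -- append ua
  have hua2 : ua ≠ trd blocks q y1 := by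
    intro h
    have h2 := trd_invol hS hqP hy1P hqy1
    rw [← h] at h2
    exact hy1d h2.symm
  have hua3 : ua ≠ trd blocks r y1 := by
    intro h
    have h2 := trd_invol hS hrP hy1P hry1
    rw [← h] at h2
    exact hy1e h2.symm
  set L2 := L1 ++ [ua] with hL2def
  have hOk2 : Ok blocks L2 :=
    ok_append hOk1 (ext_of_last3 hS hOk1 hd1 hqP hrP hy1P hua1 hua2 hua3)
  have hd2 : L2.drop (L2.length - 3) = [r, y1, ua] := last3_append L1 hd1 ua
  have hN2 : L2.Nodup := by
    refine nodup_concat hN1 ?_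
    rw [hTF1]
    simp only [Finset.mem_insert, not_or]
    exact ⟨by rintro rfl; exact huaI hy1I, hnotL0_U ua huaU⟩
  have hTF2 : L2.toFinset = insert ua L1.toFinset := by
    rw [hL2def]; ext z; simp [or_comm]
  -- choose w ∈ U.erase ua with w ≠ trd y1 ua
  have hUe1card : (U.erase ua).card = 2 := by rw [Finset.card_erase_of_mem huaU, hUcard]
  obtain ⟨w, hwUe, hwne0⟩ := exists_avoid
    (show ({trd blocks y1 ua} : Finset α).card < (U.erase ua).card by simp [hUe1card])
  have hwU : w ∈ U := Finset.mem_of_mem_erase hwUe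
  have hwua : w ≠ ua := (Finset.mem_erase.mp hwUe).1
  have hwne : w ≠ trd blocks y1 ua := by simpa using hwne0
  have hwP : w ∈ points := hUpts w hwU
  have hwI : w ∉ I := hUI w hwU
  -- w' is the remaining element of U
  obtain ⟨w', hw'eq⟩ := Finset.card_eq_one.mp
    (show ((U.erase ua).erase w).card = 1 by rw [Finset.card_erase_of_mem hwUe, hUe1card])
  have hw'mem : w' ∈ (U.erase ua).erase w := by rw [hw'eq]; simp
  have hw'U : w' ∈ U := Finset.mem_of_mem_erase (Finset.mem_of_mem_erase hw'mem)
  have hw'w : w' ≠ w := (Finset.mem_erase.mp hw'mem).1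
  have hw'ua : w' ≠ ua := (Finset.mem_erase.mp (Finset.mem_of_mem_erase hw'mem)).1
  have hw'P : w' ∈ points := hUpts w' hw'U
  have hw'I : w' ∉ I := hUI w' hw'U
  -- choose y2
  obtain ⟨y2, hy2mem, hy2F⟩ := exists_avoid
    (show ({trd blocks r y1, trd blocks r ua, trd blocks y1 ua, trd blocks y1 w,
        trd blocks ua w, trd blocks w w'} : Finset α).card < (I.erase y1).card from
      lt_of_le_of_lt (card6_le _ _ _ _ _ _)
        (by rw [Finset.card_erase_of_mem hy1I, hIcard]; norm_num))
  simp only [Finset.mem_insert, Finset.mem_singleton, not_or] at hy2F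
  obtain ⟨hy2a, hy2b, hy2c, hy2d, hy2e, hy2f⟩ := hy2F
  have hy2I : y2 ∈ I := Finset.mem_of_mem_erase hy2mem
  have hy2y1 : y2 ≠ y1 := (Finset.mem_erase.mp hy2mem).1
  have hy2P : y2 ∈ points := hIsub hy2I
  -- L3 = L2 ++ [y2]
  set L3 := L2 ++ [y2] with hL3def
  have hOk3 : Ok blocks L3 :=
    ok_append hOk2 (ext_of_last3 hS hOk2 hd2 hrP hy1P huaP hy2a hy2b hy2c)
  have hd3 : L3.drop (L3.length - 3) = [y1, ua, y2] := last3_append L2 hd2 y2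
  have hN3 : L3.Nodup := by
    refine nodup_concat hN2 ?_
    rw [hTF2, hTF1]
    simp only [Finset.mem_insert, not_or]
    refine ⟨by rintro rfl; exact huaI hy2I, hy2y1, hnotL0_I y2 hy2I⟩
  have hTF3 : L3.toFinset = insert y2 L2.toFinset := by
    rw [hL3def]; ext z; simp [or_comm]
  -- append w
  have huay2 : ua ≠ y2 := by rintro rfl; exact huaI hy2I
  have hwb : w ≠ trd blocks y1 y2 := by
    intro h
    have h2 := trd_invol hS hy1P hy2P hy2y1.symm
    rw [← h] at h2
    exact hy2d h2.symm
  have hwc : w ≠ trd blocks ua y2 := by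
    intro h
    have h2 := trd_invol hS huaP hy2P huay2
    rw [← h] at h2
    exact hy2e h2.symm
  set L4 := L3 ++ [w] with hL4def
  have hOk4 : Ok blocks L4 :=
    ok_append hOk3 (ext_of_last3 hS hOk3 hd3 hy1P huaP hy2P hwne hwb hwc)
  have hd4 : L4.drop (L4.length - 3) = [ua, y2, w] := last3_append L3 hd3 w
  have hN4 : L4.Nodup := by
    refine nodup_concat hN3 ?_
    rw [hTF3, hTF2, hTF1]
    simp only [Finset.mem_insert, not_or]
    exact ⟨by rintro rfl; exact hwI hy2I, hwua, by rintro rfl; exact hwI hy1I,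
      hnotL0_U w hwU⟩
  have hTF4 : L4.toFinset = insert w L3.toFinset := by
    rw [hL4def]; ext z; simp [or_comm]
  -- choose y3
  obtain ⟨y3, hy3mem, hy3F⟩ := exists_avoid
    (show ({trd blocks ua y2, trd blocks ua w, trd blocks y2 w, trd blocks y2 w',
        trd blocks w w'} : Finset α).card < ((I.erase y1).erase y2).card from
      lt_of_le_of_lt (card5_le _ _ _ _ _)
        (by rw [Finset.card_erase_of_mem hy2mem, Finset.card_erase_of_mem hy1I, hIcard]
            norm_num))
  simp only [Finset.mem_insert, Finset.mem_singleton, not_or] at hy3F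
  obtain ⟨hy3a, hy3b, hy3c, hy3d, hy3e⟩ := hy3F
  have hy3I : y3 ∈ I := Finset.mem_of_mem_erase (Finset.mem_of_mem_erase hy3mem)
  have hy3y2 : y3 ≠ y2 := (Finset.mem_erase.mp hy3mem).1
  have hy3y1 : y3 ≠ y1 := (Finset.mem_erase.mp (Finset.mem_of_mem_erase hy3mem)).1
  have hy3P : y3 ∈ points := hIsub hy3I
  -- L5 = L4 ++ [y3]
  set L5 := L4 ++ [y3] with hL5def
  have hOk5 : Ok blocks L5 :=
    ok_append hOk4 (ext_of_last3 hS hOk4 hd4 huaP hy2P hwP hy3a hy3b hy3c)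
  have hd5 : L5.drop (L5.length - 3) = [y2, w, y3] := last3_append L4 hd4 y3
  have hN5 : L5.Nodup := by
    refine nodup_concat hN4 ?_
    rw [hTF4, hTF3, hTF2, hTF1]
    simp only [Finset.mem_insert, not_or]
    exact ⟨by rintro rfl; exact hwI hy3I, hy3y2, by rintro rfl; exact huaI hy3I,
      hy3y1, hnotL0_I y3 hy3I⟩
  have hTF5 : L5.toFinset = insert y3 L4.toFinset := by
    rw [hL5def]; ext z; simp [or_comm]
  -- append w'
  have hy2w : y2 ≠ w := by rintro rfl; exact hwI hy2I
  have hwy3 : w ≠ y3 := by rintro rfl; exact hwI hy3I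
  have hw'a : w' ≠ trd blocks y2 w := by
    intro h
    rw [trd_comm hS hy2P hwP hy2w] at h
    have h2 := trd_invol hS hwP hy2P hy2w.symm
    rw [← h] at h2
    exact hy2f h2.symm
  have hw'b : w' ≠ trd blocks y2 y3 := by
    intro h
    have h2 := trd_invol hS hy2P hy3P hy3y2.symm
    rw [← h] at h2
    exact hy3d h2.symm
  have hw'c : w' ≠ trd blocks w y3 := by
    intro h
    have h2 := trd_invol hS hwP hy3P hwy3
    rw [← h] at h2
    exact hy3e h2.symm
  set L6 := L5 ++ [w'] with hL6def
  have hOk6 : Ok blocks L6 :=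
    ok_append hOk5 (ext_of_last3 hS hOk5 hd5 hy2P hwP hy3P hw'a hw'b hw'c)
  have hd6 : L6.drop (L6.length - 3) = [w, y3, w'] := last3_append L5 hd5 w'
  have hN6 : L6.Nodup := by
    refine nodup_concat hN5 ?_
    rw [hTF5, hTF4, hTF3, hTF2, hTF1]
    simp only [Finset.mem_insert, not_or]
    exact ⟨by rintro rfl; exact hw'I hy3I, hw'w, by rintro rfl; exact hw'I hy2I,
      hw'ua, by rintro rfl; exact hw'I hy1I, hnotL0_U w' hw'U⟩
  have hTF6 : L6.toFinset = insert w' L5.toFinset := by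
    rw [hL6def]; ext z; simp [or_comm]
  -- choose t1
  obtain ⟨t1, ht1mem, ht1F⟩ := exists_avoid
    (show ({trd blocks w y3, trd blocks w w', trd blocks y3 w'} : Finset α).card <
        (((I.erase y1).erase y2).erase y3).card from
      lt_of_le_of_lt (card3_le _ _ _)
        (by rw [Finset.card_erase_of_mem hy3mem, Finset.card_erase_of_mem hy2mem,
              Finset.card_erase_of_mem hy1I, hIcard]
            norm_num))
  simp only [Finset.mem_insert, Finset.mem_singleton, not_or] at ht1F
  obtain ⟨ht1a, ht1b, ht1c⟩ := ht1F
  have ht1I : t1 ∈ I :=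
    Finset.mem_of_mem_erase (Finset.mem_of_mem_erase (Finset.mem_of_mem_erase ht1mem))
  have ht1y3 : t1 ≠ y3 := (Finset.mem_erase.mp ht1mem).1
  have ht1y2 : t1 ≠ y2 := (Finset.mem_erase.mp (Finset.mem_of_mem_erase ht1mem)).1
  have ht1y1 : t1 ≠ y1 :=
    (Finset.mem_erase.mp (Finset.mem_of_mem_erase (Finset.mem_of_mem_erase ht1mem))).1
  have ht1P : t1 ∈ points := hIsub ht1I
  set L7 := L6 ++ [t1] with hL7def
  have hOk7 : Ok blocks L7 :=
    ok_append hOk6 (ext_of_last3 hS hOk6 hd6 hwP hy3P hw'P ht1a ht1b ht1c)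
  have hd7 : L7.drop (L7.length - 3) = [y3, w', t1] := last3_append L6 hd6 t1
  have hN7 : L7.Nodup := by
    refine nodup_concat hN6 ?_
    rw [hTF6, hTF5, hTF4, hTF3, hTF2, hTF1]
    simp only [Finset.mem_insert, not_or]
    exact ⟨by rintro rfl; exact hw'I ht1I, ht1y3, by rintro rfl; exact hwI ht1I,
      ht1y2, by rintro rfl; exact huaI ht1I, ht1y1, hnotL0_I t1 ht1I⟩
  have hTF7 : L7.toFinset = insert t1 L6.toFinset := by
    rw [hL7def]; ext z; simp [or_comm]
  -- choose t2
  obtain ⟨t2, ht2mem, ht2F⟩ := exists_avoid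
    (show ({trd blocks y3 w', trd blocks y3 t1, trd blocks w' t1} : Finset α).card <
        ((((I.erase y1).erase y2).erase y3).erase t1).card from
      lt_of_le_of_lt (card3_le _ _ _)
        (by rw [Finset.card_erase_of_mem ht1mem, Finset.card_erase_of_mem hy3mem,
              Finset.card_erase_of_mem hy2mem, Finset.card_erase_of_mem hy1I, hIcard]
            norm_num))
  simp only [Finset.mem_insert, Finset.mem_singleton, not_or] at ht2F
  obtain ⟨ht2a, ht2b, ht2c⟩ := ht2F
  have ht2I : t2 ∈ I :=
    Finset.mem_of_mem_erase (Finset.mem_of_mem_erase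
      (Finset.mem_of_mem_erase (Finset.mem_of_mem_erase ht2mem)))
  have ht2t1 : t2 ≠ t1 := (Finset.mem_erase.mp ht2mem).1
  have ht2y3 : t2 ≠ y3 := (Finset.mem_erase.mp (Finset.mem_of_mem_erase ht2mem)).1
  have ht2y2 : t2 ≠ y2 :=
    (Finset.mem_erase.mp (Finset.mem_of_mem_erase (Finset.mem_of_mem_erase ht2mem))).1
  have ht2y1 : t2 ≠ y1 :=
    (Finset.mem_erase.mp (Finset.mem_of_mem_erase
      (Finset.mem_of_mem_erase (Finset.mem_of_mem_erase ht2mem)))).1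
  have ht2P : t2 ∈ points := hIsub ht2I
  set L8 := L7 ++ [t2] with hL8def
  have hOk8 : Ok blocks L8 :=
    ok_append hOk7 (ext_of_last3 hS hOk7 hd7 hy3P hw'P ht1P ht2a ht2b ht2c)
  have hd8 : L8.drop (L8.length - 3) = [w', t1, t2] := last3_append L7 hd7 t2
  have hN8 : L8.Nodup := by
    refine nodup_concat hN7 ?_
    rw [hTF7, hTF6, hTF5, hTF4, hTF3, hTF2, hTF1]
    simp only [Finset.mem_insert, not_or]
    exact ⟨ht2t1, by rintro rfl; exact hw'I ht2I, ht2y3, by rintro rfl; exact hwI ht2I,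
      ht2y2, by rintro rfl; exact huaI ht2I, ht2y1, hnotL0_I t2 ht2I⟩
  have hTF8 : L8.toFinset = insert t2 L7.toFinset := by
    rw [hL8def]; ext z; simp [or_comm]
  -- choose t3
  obtain ⟨t3, ht3mem, ht3F⟩ := exists_avoid
    (show ({trd blocks w' t1, trd blocks w' t2} : Finset α).card <
        (((((I.erase y1).erase y2).erase y3).erase t1).erase t2).card from
      lt_of_le_of_lt (card2_le _ _)
        (by rw [Finset.card_erase_of_mem ht2mem, Finset.card_erase_of_mem ht1mem,
              Finset.card_erase_of_mem hy3mem, Finset.card_erase_of_mem hy2mem,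
              Finset.card_erase_of_mem hy1I, hIcard]
            norm_num))
  simp only [Finset.mem_insert, Finset.mem_singleton, not_or] at ht3F
  obtain ⟨ht3a, ht3b⟩ := ht3F
  have ht3I : t3 ∈ I :=
    Finset.mem_of_mem_erase (Finset.mem_of_mem_erase (Finset.mem_of_mem_erase
      (Finset.mem_of_mem_erase (Finset.mem_of_mem_erase ht3mem))))
  have ht3t2 : t3 ≠ t2 := (Finset.mem_erase.mp ht3mem).1
  have ht3t1 : t3 ≠ t1 := (Finset.mem_erase.mp (Finset.mem_of_mem_erase ht3mem)).1
  have ht3y3 : t3 ≠ y3 :=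
    (Finset.mem_erase.mp (Finset.mem_of_mem_erase (Finset.mem_of_mem_erase ht3mem))).1
  have ht3y2 : t3 ≠ y2 :=
    (Finset.mem_erase.mp (Finset.mem_of_mem_erase
      (Finset.mem_of_mem_erase (Finset.mem_of_mem_erase ht3mem)))).1
  have ht3y1 : t3 ≠ y1 :=
    (Finset.mem_erase.mp (Finset.mem_of_mem_erase (Finset.mem_of_mem_erase
      (Finset.mem_of_mem_erase (Finset.mem_of_mem_erase ht3mem))))).1
  have ht3P : t3 ∈ points := hIsub ht3I
  have ht3c : t3 ≠ trd blocks t1 t2 := by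
    intro h
    have := trd_not_mem_indep hS hIsub hI ht1I ht2I ht2t1.symm
    rw [← h] at this
    exact this ht3I
  set L9 := L8 ++ [t3] with hL9def
  have hOk9 : Ok blocks L9 :=
    ok_append hOk8 (ext_of_last3 hS hOk8 hd8 hw'P ht1P ht2P ht3a ht3b ht3c)
  have hd9 : L9.drop (L9.length - 3) = [t1, t2, t3] := last3_append L8 hd8 t3
  have hN9 : L9.Nodup := by
    refine nodup_concat hN8 ?_
    rw [hTF8, hTF7, hTF6, hTF5, hTF4, hTF3, hTF2, hTF1]
    simp only [Finset.mem_insert, not_or]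
    exact ⟨ht3t2, ht3t1, by rintro rfl; exact hw'I ht3I, ht3y3,
      by rintro rfl; exact hwI ht3I, ht3y2, by rintro rfl; exact huaI ht3I, ht3y1,
      hnotL0_I t3 ht3I⟩
  have hTF9 : L9.toFinset = insert t3 L8.toFinset := by
    rw [hL9def]; ext z; simp [or_comm]
  -- the remaining independent points
  set R := (((((I.erase y1).erase y2).erase y3).erase t1).erase t2).erase t3 with hRdef
  have hRsubI : R ⊆ I := by
    intro z hz
    exact Finset.mem_of_mem_erase (Finset.mem_of_mem_erase (Finset.mem_of_mem_erase
      (Finset.mem_of_mem_erase (Finset.mem_of_mem_erase (Finset.mem_of_mem_erase hz)))))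
  set Lfin := L9 ++ R.toList with hLfindef
  have hOkfin : Ok blocks Lfin := by
    refine ok_append_indep hI R.toList L9 hOk9 ?_ ?_
    · rw [hd9]
      intro z hz
      simp at hz
      rcases hz with rfl | rfl | rfl
      · exact ht1I
      · exact ht2I
      · exact ht3I
    · intro x hx
      exact hRsubI (Finset.mem_toList.mp hx)
  -- nodup
  have hdisj : L9.Disjoint R.toList := by
    intro a haL haR
    have haR' : a ∈ R := Finset.mem_toList.mp haR
    have haI : a ∈ I := hRsubI haR'
    have h1 : a ≠ t3 := (Finset.mem_erase.mp haR').1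
    have h2 : a ≠ t2 := (Finset.mem_erase.mp (Finset.mem_of_mem_erase haR')).1
    have h3 : a ≠ t1 := (Finset.mem_erase.mp (Finset.mem_of_mem_erase
      (Finset.mem_of_mem_erase haR'))).1
    have h4 : a ≠ y3 := (Finset.mem_erase.mp (Finset.mem_of_mem_erase
      (Finset.mem_of_mem_erase (Finset.mem_of_mem_erase haR')))).1
    have h5 : a ≠ y2 := (Finset.mem_erase.mp (Finset.mem_of_mem_erase
      (Finset.mem_of_mem_erase (Finset.mem_of_mem_erase
        (Finset.mem_of_mem_erase haR'))))).1
    have h6 : a ≠ y1 := (Finset.mem_erase.mp (Finset.mem_of_mem_erase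
      (Finset.mem_of_mem_erase (Finset.mem_of_mem_erase (Finset.mem_of_mem_erase
        (Finset.mem_of_mem_erase haR')))))).1
    have haL' : a ∈ L9.toFinset := List.mem_toFinset.mpr haL
    rw [hTF9, hTF8, hTF7, hTF6, hTF5, hTF4, hTF3, hTF2, hTF1] at haL'
    simp only [Finset.mem_insert] at haL'
    rcases haL' with rfl | rfl | rfl | rfl | rfl | rfl | rfl | rfl | rfl | hbase
    · exact h1 rfl
    · exact h2 rfl
    · exact h3 rfl
    · exact hw'I haI
    · exact h4 rfl
    · exact hwI haI
    · exact h5 rfl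
    · exact huaI haI
    · exact h6 rfl
    · exact hnotL0_I a haI hbase
  have hNfin : Lfin.Nodup :=
    List.nodup_append'.mpr ⟨hN9, Finset.nodup_toList R, hdisj⟩
  -- toFinset = points
  have eU2 : insert w ((U.erase ua).erase w) = U.erase ua := Finset.insert_erase hwUe
  have eU1 : insert ua (U.erase ua) = U := Finset.insert_erase huaU
  have hUdec : U = insert ua (insert w ({w'} : Finset α)) := by
    rw [← eU1, ← eU2, hw'eq]
  have e6 : insert t3 R = ((((I.erase y1).erase y2).erase y3).erase t1).erase t2 :=
    Finset.insert_erase ht3mem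
  have e5 : insert t2 (((((I.erase y1).erase y2).erase y3).erase t1).erase t2) =
      (((I.erase y1).erase y2).erase y3).erase t1 := Finset.insert_erase ht2mem
  have e4 : insert t1 ((((I.erase y1).erase y2).erase y3).erase t1) =
      ((I.erase y1).erase y2).erase y3 := Finset.insert_erase ht1mem
  have e3 : insert y3 (((I.erase y1).erase y2).erase y3) = (I.erase y1).erase y2 :=
    Finset.insert_erase hy3mem
  have e2 : insert y2 ((I.erase y1).erase y2) = I.erase y1 := Finset.insert_erase hy2mem
  have e1 : insert y1 (I.erase y1) = I := Finset.insert_erase hy1I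
  have hIdec : I = insert y1 (insert y2 (insert y3 (insert t1 (insert t2 (insert t3 R))))) := by
    rw [e6, e5, e4, e3, e2, e1]
  have hTFfin : Lfin.toFinset = points := by
    have h1 : Lfin.toFinset = L9.toFinset ∪ R := by
      rw [hLfindef]
      ext z
      simp
    rw [h1, hTF9, hTF8, hTF7, hTF6, hTF5, hTF4, hTF3, hTF2, hTF1, hTF0]
    ext z
    simp only [Finset.mem_union, Finset.mem_insert, Finset.mem_sdiff]
    constructor
    · intro h
      rcases h with h | hz
      · rcases h with rfl | rfl | rfl | rfl | rfl | rfl | rfl | rfl | rfl | h'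
        · exact ht3P
        · exact ht2P
        · exact ht1P
        · exact hw'P
        · exact hy3P
        · exact hwP
        · exact hy2P
        · exact huaP
        · exact hy1P
        · exact h'.1.1
      · exact hIsub (hRsubI hz)
    · intro hz
      by_cases hzI : z ∈ I
      · rw [hIdec] at hzI
        simp only [Finset.mem_insert] at hzI
        rcases hzI with rfl | rfl | rfl | rfl | rfl | rfl | hzR
        · left; right; right; right; right; right; right; right; right; left; rfl
        · left; right; right; right; right; right; right; left; rfl
        · left; right; right; right; right; left; rfl
        · left; right; right; left; rfl
        · left; right; left; rfl
        · left; left; rfl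
        · right; exact hzR
      · by_cases hzU : z ∈ U
        · rw [hUdec] at hzU
          simp only [Finset.mem_insert, Finset.mem_singleton] at hzU
          rcases hzU with rfl | rfl | rfl
          · left; right; right; right; right; right; right; right; left; rfl
          · left; right; right; right; right; right; left; rfl
          · left; right; right; right; left; rfl
        · left
          right; right; right; right; right; right; right; right; right
          exact ⟨⟨hz, hzI⟩, hzU⟩
  exact ⟨Lfin, hNfin, hTFfin, hOkfin⟩
end
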